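/- arXiv:1406.3091 — 5 statements merged into one kernel-verified Lean document; each statement's English description precedes it below -/
import Mathlib

section
/- For all positive integers k ≤ n there exists a k-uniform hypergraph H on n vertices with δ_{k−1}(H) ≥ n/2 − k − 1 such that H contains no r-factor for any odd positive integer r. -/
/-!
Fix a set `D` of odd size `d ≈ n/2` and let `H` consist of the `k`-sets meeting `D` in an even
number of vertices. If `F ⊆ H` were an `r`-factor, double counting the incidences between `D` and
`F` would give `∑_{f ∈ F} |f ∩ D| = d r`, which is odd although every summand is even.
A `(k-1)`-set `A` extends to an edge of `H` by any vertex outside `D ∪ A` when `|A ∩ D|` is even,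
and by any vertex of `D \ A` when it is odd, so its codegree is at least `min(n - d, d) - (k - 1)`.
-/

open Finset

variable {α : Type*} [DecidableEq α]

def evenTraceFamily [Fintype α] (D : Finset α) (k : ℕ) : Finset (Finset α) :=
  {f ∈ powersetCard k univ | Even #(D ∩ f)}

@[simp]
lemma mem_evenTraceFamily [Fintype α] {D f : Finset α} {k : ℕ} :
    f ∈ evenTraceFamily D k ↔ #f = k ∧ Even #(D ∩ f) := by
  simp [evenTraceFamily]

lemma card_le_card_filter_superset {H : Finset (Finset α)} {A S : Finset α}
    (hSA : Disjoint S A) (hS : ∀ v ∈ S, insert v A ∈ H) :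
    #S ≤ #{f ∈ H | A ⊆ f} := by
  refine card_le_card_of_injOn (fun v => insert v A)
    (fun v hv => mem_filter.mpr ⟨hS v hv, subset_insert v A⟩) ?_
  intro v hv w _ hvw
  exact (insert_inj (disjoint_left.mp hSA hv)).mp hvw

lemma min_sub_card_le_card_filter_evenTraceFamily [Fintype α] (D A : Finset α) {k : ℕ}
    (hA : #A + 1 = k) :
    min (Fintype.card α - #D) #D - #A ≤ #{f ∈ evenTraceFamily D k | A ⊆ f} := by
  have hcard : ∀ v ∉ A, #(insert v A) = k := fun v hv => by rw [card_insert_of_notMem hv, hA]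
  rcases Nat.even_or_odd #(D ∩ A) with hAD | hAD
  · have hS : ∀ v ∈ (D ∪ A)ᶜ, insert v A ∈ evenTraceFamily D k := fun v hv => by
      simp only [mem_compl, mem_union, not_or] at hv
      rw [mem_evenTraceFamily, inter_insert_of_notMem hv.1]
      exact ⟨hcard v hv.2, hAD⟩
    calc min (Fintype.card α - #D) #D - #A
        ≤ Fintype.card α - #(D ∪ A) := by have := card_union_le D A; omega
      _ = #(D ∪ A)ᶜ := (card_compl _).symm
      _ ≤ _ := card_le_card_filter_superset
          (disjoint_left.mpr fun v hv hvA => (mem_compl.mp hv) (mem_union_right D hvA)) hS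
  · have hS : ∀ v ∈ D \ A, insert v A ∈ evenTraceFamily D k := fun v hv => by
      rw [mem_sdiff] at hv
      rw [mem_evenTraceFamily, inter_insert_of_mem hv.1,
        card_insert_of_notMem fun h => hv.2 (mem_inter.mp h).2]
      exact ⟨hcard v hv.2, hAD.add_one⟩
    calc min (Fintype.card α - #D) #D - #A
        ≤ #D - #A := Nat.sub_le_sub_right (min_le_right _ _) _
      _ ≤ #(D \ A) := le_card_sdiff A D
      _ ≤ _ := card_le_card_filter_superset sdiff_disjoint hS

lemma even_card_mul_of_forall_even_card_inter {D : Finset α} {F : Finset (Finset α)} {r : ℕ}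
    (hF : ∀ f ∈ F, Even #(D ∩ f)) (hdeg : ∀ v ∈ D, #{f ∈ F | v ∈ f} = r) :
    Even (#D * r) :=
  sum_card_inter hdeg ▸ even_sum _ hF

lemma evenTraceFamily_not_odd_factor [Fintype α] {D : Finset α} (hD : Odd #D) (k : ℕ) {r : ℕ}
    (hr : Odd r) {F : Finset (Finset α)} (hF : F ⊆ evenTraceFamily D k) :
    ¬ ∀ v, #{f ∈ F | v ∈ f} = r := fun hdeg =>
  Nat.not_even_iff_odd.mpr (hD.mul hr) <|
    even_card_mul_of_forall_even_card_inter (fun _ hf => (mem_evenTraceFamily.mp (hF hf)).2)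
      fun v _ => hdeg v

lemma exists_odd_near_half {n : ℕ} (hn : 0 < n) :
    ∃ d, Odd d ∧ d ≤ n ∧ n ≤ 2 * d + 1 ∧ d ≤ n / 2 + 1 := by
  rcases Nat.even_or_odd (n / 2) with h | h
  · exact ⟨n / 2 + 1, h.add_one, by omega, by omega, by omega⟩
  · exact ⟨n / 2, h, by omega, by omega, by omega⟩

theorem no_odd_factor (k n : ℕ) (hk : 0 < k) (hkn : k ≤ n) :
    ∃ H : Finset (Finset (Fin n)),
      (∀ f ∈ H, f.card = k) ∧
      (∀ A : Finset (Fin n), A.card = k - 1 →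
        (n : ℝ) / 2 - k - 1 ≤ ((H.filter (fun f => A ⊆ f)).card : ℝ)) ∧
      (∀ r : ℕ, Odd r → 0 < r →
        ¬ ∃ F ⊆ H, ∀ v : Fin n, (F.filter (fun f => v ∈ f)).card = r) := by
  obtain ⟨d, hd, hdn, hnd, hdhalf⟩ := exists_odd_near_half (hk.trans_le hkn)
  obtain ⟨D, -, hD⟩ := exists_subset_card_eq (s := (univ : Finset (Fin n))) (by simpa using hdn)
  refine ⟨evenTraceFamily D k, fun f hf => (mem_evenTraceFamily.mp hf).1, fun A hA => ?_,
    fun r hr _ ⟨F, hF, hdeg⟩ => evenTraceFamily_not_odd_factor (hD ▸ hd) k hr hF hdeg⟩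
  have hcodeg := min_sub_card_le_card_filter_evenTraceFamily D A (k := k) (by omega)
  rw [Fintype.card_fin, hD, hA] at hcodeg
  have hbound : n ≤ 2 * #{f ∈ evenTraceFamily D k | A ⊆ f} + 2 * k + 2 := by omega
  have hbound' : (n : ℝ) ≤ 2 * #{f ∈ evenTraceFamily D k | A ⊆ f} + 2 * k + 2 := by
    exact_mod_cast hbound
  linarith
end

section
/- Let k ≥ 1 be an integer and let δ > 0, ε > 0 and c > 0 be real numbers. Then there exist c′ > 0 and n₀ such that for all n ≥ n₀ the following holds. Suppose H is a k-uniform hypergraph on n vertices with δ_{k−1}(H) ≥ (δ+ε)n, and m₁, …, m_t are positive integers with m_i ≥ cn for every 1 ≤ i ≤ t and m₁ + ⋯ + m_t = n. Then among all ordered partitions V(H) = V₁ ∪ ⋯ ∪ V_t with |V_i| = m_i for every i, the proportion of partitions failing to satisfy 'δ_{k−1}(V_i) ≥ (δ + 2ε/3)m_i for every 1 ≤ i ≤ t' is at most e^{−c′n}. -/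
/-!
Fix a part `i` and a `(k-1)`-set `X`. By symmetry the part `V_i` of a uniformly random
partition with part sizes `m` is a uniformly random `m_i`-subset, so `|V_i ∩ N(X)|` is
hypergeometric, where the neighbourhood `N(X)` has density at least `δ + ε`. The hypergeometric
weights `C(|N|, j) C(n - |N|, m_i - j)` grow by a factor `1 + γ` (with `γ` of order `εc`) at
every step `j < (δ + 5ε/6) m_i`, so the weights below `(δ + 2ε/3) m_i` make up at most a
fraction `(n + 1) (1 + γ)^{-εm_i/6} ≤ e^{-Ω(n)}` of the total. A union bound over the at most
`n^{k-1}/c` pairs `(i, X)` costs only a polynomial factor.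
-/

open Finset Real

section Hypergeometric

theorem Nat.choose_succ_mul_choose_sub_mul {N M m j : ℕ} (hj : j < m) :
    N.choose (j + 1) * M.choose (m - (j + 1)) * ((j + 1) * (M - (m - (j + 1)))) =
      N.choose j * M.choose (m - j) * ((N - j) * (m - j)) := by
  have hN := Nat.choose_succ_right_eq N j
  have hM := Nat.choose_succ_right_eq M (m - (j + 1))
  rw [show m - (j + 1) + 1 = m - j by omega] at hM
  calc _ = N.choose (j + 1) * (j + 1) * (M.choose (m - (j + 1)) * (M - (m - (j + 1)))) := by ring
    _ = N.choose j * (N - j) * (M.choose (m - j) * (m - j)) := by rw [hN, hM]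
    _ = _ := by ring

theorem one_add_mul_choose_mul_choose_le {N M m j : ℕ} {γ : ℝ} (hj : j < m)
    (h : (1 + γ) * (j + 1) * (M - m + j + 1) ≤ (N - j) * (m - j)) :
    (1 + γ) * (N.choose j * M.choose (m - j) : ℕ) ≤
      (N.choose (j + 1) * M.choose (m - (j + 1)) : ℕ) := by
  rcases Nat.eq_zero_or_pos (N.choose j * M.choose (m - j)) with h0 | hpos
  · rw [h0, Nat.cast_zero, mul_zero]
    positivity
  obtain ⟨hjN, hmM⟩ : j ≤ N ∧ m - j ≤ M := by
    simpa only [CanonicallyOrderedAdd.mul_pos, Nat.pos_iff_ne_zero, ne_eq, Nat.choose_eq_zero_iff,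
      not_lt] using hpos
  have hid := congrArg (Nat.cast (R := ℝ))
    (Nat.choose_succ_mul_choose_sub_mul (N := N) (M := M) hj)
  push_cast [Nat.cast_sub hjN, Nat.cast_sub hj.le, Nat.cast_sub (show m - (j + 1) ≤ M by omega),
    Nat.cast_sub (show j + 1 ≤ m by omega)] at hid
  have hmM' : (m : ℝ) ≤ M + j := by exact_mod_cast Nat.sub_le_iff_le_add.1 hmM
  have hD : (0 : ℝ) < (j + 1) * (M - (m - (j + 1))) := by nlinarith
  refine le_of_mul_le_mul_right ?_ hD
  push_cast
  calc (1 + γ) * (N.choose j * M.choose (m - j)) * ((j + 1) * (M - (m - (j + 1))))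
      = (N.choose j * M.choose (m - j) : ℝ) * ((1 + γ) * (j + 1) * (M - m + j + 1)) := by ring
    _ ≤ (N.choose j * M.choose (m - j) : ℝ) * ((N - j) * (m - j)) := by gcongr
    _ = _ := hid.symm

theorem pow_mul_le_of_forall_mul_le_succ {f : ℕ → ℝ} {a : ℝ} (ha : 0 ≤ a) {i j : ℕ}
    (hij : i ≤ j) (h : ∀ l, i ≤ l → l < j → a * f l ≤ f (l + 1)) :
    a ^ (j - i) * f i ≤ f j := by
  induction j, hij using Nat.le_induction with
  | base => simp
  | succ j hij ih =>
    calc a ^ (j + 1 - i) * f i = a * (a ^ (j - i) * f i) := by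
          rw [Nat.sub_add_comm hij, pow_succ]; ring
      _ ≤ a * f j := by gcongr; exact ih fun l hil hlj => h l hil (by omega)
      _ ≤ f (j + 1) := h j hij (by omega)

theorem Nat.choose_mul_choose_sub_le_add_choose (N M : ℕ) {m j : ℕ} (hj : j ≤ m) :
    N.choose j * M.choose (m - j) ≤ (N + M).choose m := by
  rw [Nat.add_choose_eq]
  exact single_le_sum (f := fun ij : ℕ × ℕ => N.choose ij.1 * M.choose ij.2)
    (fun _ _ => zero_le _)
    (mem_antidiagonal.2 (Nat.add_sub_cancel' hj : (j, m - j).1 + (j, m - j).2 = m))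

theorem one_add_pow_mul_sum_choose_mul_choose_le {N M m J j₀ : ℕ} {γ : ℝ} (hγ : 0 ≤ γ)
    (hJ : J ≤ j₀) (hj₀ : j₀ ≤ m)
    (hratio : ∀ j < j₀, (1 + γ) * (j + 1) * (M - m + j + 1) ≤ (N - j) * (m - j)) :
    (1 + γ) ^ (j₀ - J) *
        ∑ j ∈ range (J + 1), ((N.choose j * M.choose (m - j) : ℕ) : ℝ) ≤
      (J + 1) * (N + M).choose m := by
  set T : ℕ → ℝ := fun j => ((N.choose j * M.choose (m - j) : ℕ) : ℝ)
  have hgrowth : ∀ j < j₀, (1 + γ) * T j ≤ T (j + 1) := fun j hj =>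
    one_add_mul_choose_mul_choose_le (by omega) (hratio j hj)
  have hmono : ∀ j < j₀, 1 * T j ≤ T (j + 1) := fun j hj =>
    (mul_le_mul_of_nonneg_right (by linarith) (Nat.cast_nonneg _)).trans (hgrowth j hj)
  have hsum : ∑ j ∈ range (J + 1), T j ≤ (J + 1) * T J := by
    calc _ ≤ #(range (J + 1)) • T J := sum_le_card_nsmul _ _ _ fun j hj => by
          simpa using pow_mul_le_of_forall_mul_le_succ zero_le_one (mem_range_succ_iff.1 hj)
            fun l _ hl => hmono l (by omega)
      _ = (J + 1) * T J := by simp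
  have hpow : (1 + γ) ^ (j₀ - J) * T J ≤ T j₀ :=
    pow_mul_le_of_forall_mul_le_succ (by linarith) hJ fun l _ hl => hgrowth l hl
  have hvandermonde : T j₀ ≤ (N + M).choose m := by
    exact Nat.cast_le.2 (Nat.choose_mul_choose_sub_le_add_choose N M hj₀)
  calc (1 + γ) ^ (j₀ - J) * ∑ j ∈ range (J + 1), T j
        ≤ (1 + γ) ^ (j₀ - J) * ((J + 1) * T J) := by gcongr
    _ = (J + 1) * ((1 + γ) ^ (j₀ - J) * T J) := by ring
    _ ≤ (J + 1) * (N + M).choose m := by gcongr; exact hpow.trans hvandermonde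

-- `(r - j)(m - j) - (j + 1)(n - r - m + j + 1) = rm - jn - O(n)`, and `rm - jn ≥ ηmn/2`.
theorem hypergeometric_ratio_bound {n r m j p η c : ℝ} (hη : 0 < η) (hc : 0 < c) (hn : 1 ≤ n)
    (hr : p * n ≤ r) (hrn : r ≤ n) (hm : c * n ≤ m) (hmn : m ≤ n) (hj₀ : 0 ≤ j)
    (hj : j ≤ (p - η / 2) * m) (hlarge : 16 ≤ η * c * n) :
    (1 + η * c / 16) * (j + 1) * (n - r - m + j + 1) ≤ (r - j) * (m - j) := by
  have hm₀ : 0 < m := lt_of_lt_of_le (by positivity) hm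
  have hp : p ≤ 1 := by nlinarith
  have hp' : η / 2 ≤ p := by nlinarith
  have hjm : j ≤ m := hj.trans (by nlinarith)
  have hr₀ : 0 ≤ r := le_trans (by nlinarith) hr
  have hmain : η / 2 * c * n ^ 2 ≤ r * m - j * n := by
    nlinarith [mul_le_mul_of_nonneg_right hr hm₀.le,
      mul_le_mul_of_nonneg_right hj (by linarith : 0 ≤ n),
      mul_le_mul_of_nonneg_left hm (by positivity : 0 ≤ η / 2 * n)]
  have herror : η * c / 16 * (j + 1) * (n - r - m + j + 1) ≤ η * c / 4 * n ^ 2 := by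
    rcases le_or_gt (n - r - m + j + 1) 0 with hZ | hZ
    · have : η * c / 16 * (j + 1) * (n - r - m + j + 1) ≤ 0 :=
        mul_nonpos_of_nonneg_of_nonpos (by positivity) hZ
      nlinarith
    · calc η * c / 16 * (j + 1) * (n - r - m + j + 1) ≤ η * c / 16 * (2 * n) * (2 * n) := by
            gcongr <;> linarith
        _ = η * c / 4 * n ^ 2 := by ring
  nlinarith

-- The hypergeometric weights grow by the factor `1 + ηc/16` over at least `ηcn/2` consecutive
-- steps.
noncomputable def tailRate (η c : ℝ) : ℝ := η * c / 2 * log (1 + η * c / 16)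

theorem tailRate_pos {η c : ℝ} (hη : 0 < η) (hc : 0 < c) : 0 < tailRate η c := by
  unfold tailRate
  have : 0 < log (1 + η * c / 16) := log_pos (by linarith [mul_pos hη hc])
  positivity

theorem exp_tailRate_mul_le_one_add_pow {η c x : ℝ} {D : ℕ} (hη : 0 < η) (hc : 0 < c)
    (hD : η * c / 2 * x ≤ D) : exp (tailRate η c * x) ≤ (1 + η * c / 16) ^ D := by
  have hγ : 0 < η * c / 16 := by positivity
  rw [← exp_log (by linarith : 0 < 1 + η * c / 16), ← exp_nat_mul, exp_le_exp, tailRate,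
    mul_right_comm]
  exact mul_le_mul_of_nonneg_right hD (log_pos (lt_add_of_pos_right 1 hγ)).le

theorem sum_range_floor_choose_mul_choose_le {n N m : ℕ} {p η c : ℝ} (hη : 0 < η)
    (hc : 0 < c) (hηp : η ≤ p) (hN : p * n ≤ N) (hNn : N ≤ n) (hm : c * n ≤ m)
    (hmn : m ≤ n) (hlarge : 16 ≤ η * c * n) :
    ∑ j ∈ range (⌊(p - η) * m⌋₊ + 1),
        ((N.choose j * (n - N).choose (m - j) : ℕ) : ℝ) ≤
      (n + 1) * exp (-(tailRate η c * n)) * n.choose m := by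
  set J := ⌊(p - η) * m⌋₊
  set j₀ := ⌈(p - η / 2) * m⌉₊
  have hn : (1 : ℝ) ≤ n := by
    have : n ≠ 0 := by rintro rfl; norm_num at hlarge
    exact_mod_cast Nat.one_le_iff_ne_zero.2 this
  have hNn' : (N : ℝ) ≤ n := by exact_mod_cast hNn
  have hmn' : (m : ℝ) ≤ n := by exact_mod_cast hmn
  have hp : p ≤ 1 := le_of_mul_le_mul_right (by linarith : p * n ≤ 1 * n) (by linarith)
  have hηm : 8 ≤ η / 2 * m := by nlinarith
  have hJ : (J : ℝ) ≤ (p - η) * m := Nat.floor_le (by nlinarith)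
  have hj₀ : (p - η / 2) * m ≤ j₀ := Nat.le_ceil _
  have hj₀' : (j₀ : ℝ) < (p - η / 2) * m + 1 := Nat.ceil_lt_add_one (by nlinarith)
  have hJj₀ : J ≤ j₀ := by exact_mod_cast (show (J : ℝ) ≤ j₀ by linarith)
  have hj₀m : j₀ ≤ m := by exact_mod_cast (show (j₀ : ℝ) ≤ m by nlinarith)
  have hratio : ∀ j < j₀,
      (1 + η * c / 16) * (j + 1) * (((n - N : ℕ) : ℝ) - m + j + 1) ≤ (N - j) * (m - j) := by
    intro j hj
    have hj' : (j : ℝ) + 1 ≤ j₀ := by exact_mod_cast hj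
    rw [Nat.cast_sub hNn]
    exact hypergeometric_ratio_bound hη hc hn hN hNn' hm hmn' (by positivity) (by linarith) hlarge
  have htail := one_add_pow_mul_sum_choose_mul_choose_le (by positivity) hJj₀ hj₀m hratio
  rw [Nat.add_sub_cancel' hNn] at htail
  have hpow : exp (tailRate η c * n) ≤ (1 + η * c / 16) ^ (j₀ - J) :=
    exp_tailRate_mul_le_one_add_pow hη hc (by rw [Nat.cast_sub hJj₀]; nlinarith)
  have hJn : (J : ℝ) + 1 ≤ n + 1 := by nlinarith
  calc _ ≤ (J + 1) * n.choose m / (1 + η * c / 16) ^ (j₀ - J) := by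
        rw [le_div_iff₀ (by positivity)]; linarith
    _ ≤ (n + 1) * n.choose m / exp (tailRate η c * n) := by gcongr
    _ = _ := by rw [exp_neg]; ring

end Hypergeometric

section Subsets

variable {α : Type*} [Fintype α] [DecidableEq α]

theorem card_powersetCard_filter_card_inter_eq_le (N : Finset α) (m j : ℕ) :
    #{S ∈ powersetCard m univ | #(S ∩ N) = j} ≤ (#N).choose j * (#Nᶜ).choose (m - j) := by
  rw [← card_powersetCard, ← card_powersetCard, ← card_product]
  refine card_le_card_of_injOn (fun S => (S ∩ N, S \ N)) (fun S hS => ?_) fun S _ S' _ h => ?_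
  · obtain ⟨hSm, hSj⟩ : #S = m ∧ #(S ∩ N) = j := by simpa using hS
    have := card_sdiff_add_card_inter S N
    simp only [coe_product, Set.mem_prod, mem_coe, mem_powersetCard,
      sdiff_eq_inter_compl] at this ⊢
    exact ⟨⟨inter_subset_right, hSj⟩, inter_subset_right, by omega⟩
  · simp only [Prod.mk.injEq] at h
    rw [← sdiff_union_inter S N, ← sdiff_union_inter S' N, h.1, h.2]

theorem card_powersetCard_filter_card_inter_le_le (N : Finset α) (m J : ℕ) :
    #{S ∈ powersetCard m univ | #(S ∩ N) ≤ J} ≤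
      ∑ j ∈ range (J + 1), (#N).choose j * (Fintype.card α - #N).choose (m - j) := by
  rw [card_eq_sum_card_fiberwise (f := fun S => #(S ∩ N)) (t := range (J + 1))
    fun S hS => by simpa [Nat.lt_succ_iff] using (mem_filter.1 hS).2]
  refine sum_le_sum fun j _ => ?_
  rw [← card_compl, filter_filter]
  refine (card_le_card fun S hS => ?_).trans (card_powersetCard_filter_card_inter_eq_le N m j)
  simp only [mem_filter] at hS ⊢
  exact ⟨hS.1, hS.2.2⟩

theorem card_powersetCard_filter_card_inter_lt_le {N : Finset α} {m : ℕ} {p η c : ℝ}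
    (hη : 0 < η) (hc : 0 < c) (hηp : η ≤ p) (hN : p * Fintype.card α ≤ #N)
    (hm : c * Fintype.card α ≤ m) (hmn : m ≤ Fintype.card α)
    (hlarge : 16 ≤ η * c * Fintype.card α) :
    (#{S ∈ powersetCard m univ | (#(S ∩ N) : ℝ) < (p - η) * m} : ℝ) ≤
      (Fintype.card α + 1) * exp (-(tailRate η c * Fintype.card α)) *
        (Fintype.card α).choose m := by
  have hcount : #{S ∈ powersetCard m univ | (#(S ∩ N) : ℝ) < (p - η) * m} ≤
      ∑ j ∈ range (⌊(p - η) * m⌋₊ + 1),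
        (#N).choose j * (Fintype.card α - #N).choose (m - j) :=
    (card_le_card (monotone_filter_right _ fun _ _ hS => Nat.le_floor hS.le)).trans
      (card_powersetCard_filter_card_inter_le_le N m _)
  calc _ ≤ ∑ j ∈ range (⌊(p - η) * m⌋₊ + 1),
        (((#N).choose j * (Fintype.card α - #N).choose (m - j) : ℕ) : ℝ) := by
        exact_mod_cast hcount
    _ ≤ _ := sum_range_floor_choose_mul_choose_le hη hc hηp hN (card_le_univ N) hm hmn hlarge

end Subsets

section Hypergraph

variable {α : Type*} [Fintype α] [DecidableEq α]

def neighborhood (H : Finset (Finset α)) (X : Finset α) : Finset α :=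
  {v | insert v X ∈ H}

theorem card_filter_subset_le_card_neighborhood {H : Finset (Finset α)} {X : Finset α}
    (hH : ∀ f ∈ H, #f = #X + 1) :
    #{f ∈ H | X ⊆ f} ≤ #(neighborhood H X) := by
  refine (card_le_card fun f hf => ?_).trans (card_image_le (f := (insert · X)))
  obtain ⟨hfH, hXf⟩ := mem_filter.1 hf
  obtain ⟨v, hv⟩ := card_eq_one.1 (by rw [card_sdiff_of_subset hXf, hH f hfH]; simp :
    #(f \ X) = 1)
  have hfv : insert v X = f := by rw [insert_eq, ← hv, sdiff_union_of_subset hXf]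
  exact mem_image.2 ⟨v, by simpa [neighborhood, hfv] using hfH, hfv⟩

end Hypergraph

theorem exists_perm_map_eq {α : Type*} [DecidableEq α] {S S' : Finset α} (h : #S = #S') :
    ∃ σ : Equiv.Perm α, S.map σ.toEmbedding = S' := by
  obtain ⟨σ, hσ⟩ := (Set.powersetCard.isPretransitive (α := α) (n := #S)).exists_smul_eq
    ⟨S, rfl⟩ ⟨S', h.symm⟩
  refine ⟨σ, ?_⟩
  simpa [Set.powersetCard.coe_smul, smul_finset_def, map_eq_image] using congrArg Subtype.val hσ

theorem filter_comp_symm_eq_map {α β : Type*} [Fintype α] [DecidableEq β] (φ : α → β)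
    (σ : Equiv.Perm α) (i : β) :
    ({v | φ (σ.symm v) = i} : Finset α) = ({v | φ v = i} : Finset α).map σ.toEmbedding := by
  ext v
  simp [mem_map_equiv]

theorem card_mul_le_one_of_sum_eq {β : Type*} [Fintype β] {m : β → ℕ} {n : ℕ} {c : ℝ}
    (hn : 0 < n) (hm : ∀ i, c * n ≤ m i) (hsum : ∑ i, m i = n) :
    Fintype.card β * c ≤ 1 := by
  have h := card_nsmul_le_sum univ (fun i => (m i : ℝ)) _ fun i _ => hm i
  rw [← Nat.cast_sum, hsum, card_univ, nsmul_eq_mul, ← mul_assoc] at h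
  exact le_of_mul_le_mul_right (by simpa using h) (by exact_mod_cast hn)

section Partitions

variable {α β : Type*} [Fintype α] [DecidableEq α] [Fintype β] [DecidableEq β]

variable (α) in
def partitionsWithSizes (m : β → ℕ) : Finset (α → β) :=
  {φ | ∀ i, #{v | φ v = i} = m i}

theorem comp_symm_mem_filter_fiber_eq {m : β → ℕ} {i : β} {S S' : Finset α}
    {σ : Equiv.Perm α} (hσ : S.map σ.toEmbedding = S') {φ : α → β}
    (hφ : φ ∈ {φ ∈ partitionsWithSizes α m | ({v | φ v = i} : Finset α) = S}) :
    φ ∘ σ.symm ∈ {φ ∈ partitionsWithSizes α m | ({v | φ v = i} : Finset α) = S'} := by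
  simp only [partitionsWithSizes, mem_filter, mem_univ, true_and, Function.comp_apply] at hφ ⊢
  refine ⟨fun j => ?_, ?_⟩
  · rw [filter_comp_symm_eq_map, card_map, hφ.1 j]
  · rw [filter_comp_symm_eq_map, hφ.2, hσ]

theorem card_partitionsWithSizes_filter_fiber_eq_congr (m : β → ℕ) (i : β) {S S' : Finset α}
    (h : #S = #S') :
    #{φ ∈ partitionsWithSizes α m | ({v | φ v = i} : Finset α) = S} =
      #{φ ∈ partitionsWithSizes α m | ({v | φ v = i} : Finset α) = S'} := by
  obtain ⟨σ, hσ⟩ := exists_perm_map_eq h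
  have hσ' : S'.map σ.symm.toEmbedding = S := by rw [← hσ, map_map]; simp
  exact card_nbij' (· ∘ σ.symm) (· ∘ σ)
    (fun φ hφ => comp_symm_mem_filter_fiber_eq hσ hφ)
    (fun φ hφ => by simpa using comp_symm_mem_filter_fiber_eq hσ' hφ)
    (fun φ _ => by ext; simp) (fun φ _ => by ext; simp)

theorem card_partitionsWithSizes_filter_fiber_mul_choose (m : β → ℕ) (i : β)
    (P : Finset α → Prop) [DecidablePred P] :
    #{φ ∈ partitionsWithSizes α m | P {v | φ v = i}} * (Fintype.card α).choose (m i) =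
      #{S ∈ powersetCard (m i) univ | P S} * #(partitionsWithSizes α m) := by
  set F : Finset α → ℕ :=
    fun S => #{φ ∈ partitionsWithSizes α m | ({v | φ v = i} : Finset α) = S}
  have hF : ∀ S ∈ powersetCard (m i) univ, ∀ S' ∈ powersetCard (m i) univ, F S = F S' :=
    fun S hS S' hS' => card_partitionsWithSizes_filter_fiber_eq_congr m i
      ((mem_powersetCard_univ.1 hS).trans (mem_powersetCard_univ.1 hS').symm)
  have hfiber : ∀ φ ∈ partitionsWithSizes α m,
      ({v | φ v = i} : Finset α) ∈ powersetCard (m i) (univ : Finset α) :=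
    fun φ hφ => mem_powersetCard_univ.2 ((mem_filter.1 hφ).2 i)
  have hbad : #{φ ∈ partitionsWithSizes α m | P {v | φ v = i}} =
      ∑ S ∈ powersetCard (m i) univ with P S, F S := by
    rw [card_eq_sum_card_fiberwise (f := fun φ => ({v | φ v = i} : Finset α))
      fun φ hφ => mem_filter.2 ⟨hfiber φ (mem_filter.1 hφ).1, (mem_filter.1 hφ).2⟩]
    refine sum_congr rfl fun S hS => congrArg card ?_
    ext φ
    simp only [mem_filter] at hS ⊢
    constructor
    · exact fun h => ⟨h.1.1, h.2⟩
    · exact fun h => ⟨⟨h.1, h.2 ▸ hS.2⟩, h.2⟩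
  have hall : #(partitionsWithSizes α m) = ∑ S ∈ powersetCard (m i) univ, F S :=
    card_eq_sum_card_fiberwise hfiber
  rw [hbad, hall, ← card_univ, ← card_powersetCard, card_eq_sum_ones (powersetCard _ _),
    card_eq_sum_ones (filter P _), sum_mul_sum, sum_mul_sum]
  refine sum_congr rfl fun S hS => sum_congr rfl fun S' hS' => ?_
  rw [mul_one, one_mul]
  exact hF S (mem_filter.1 hS).1 S' hS'

theorem card_partitionsWithSizes_filter_card_inter_lt_le {m : β → ℕ} (i : β) {N : Finset α}
    {p η c : ℝ} (hη : 0 < η) (hc : 0 < c) (hηp : η ≤ p) (hN : p * Fintype.card α ≤ #N)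
    (hm : c * Fintype.card α ≤ m i) (hmn : m i ≤ Fintype.card α)
    (hlarge : 16 ≤ η * c * Fintype.card α) :
    (#{φ ∈ partitionsWithSizes α m |
        (#(({v | φ v = i} : Finset α) ∩ N) : ℝ) < (p - η) * m i} : ℝ) ≤
      (Fintype.card α + 1) * exp (-(tailRate η c * Fintype.card α)) *
        #(partitionsWithSizes α m) := by
  have hsymm := card_partitionsWithSizes_filter_fiber_mul_choose m i
    fun S => (#(S ∩ N) : ℝ) < (p - η) * m i
  have htail := card_powersetCard_filter_card_inter_lt_le hη hc hηp hN hm hmn hlarge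
  have hchoose : (0 : ℝ) < (Fintype.card α).choose (m i) := by exact_mod_cast Nat.choose_pos hmn
  refine le_of_mul_le_mul_right ?_ hchoose
  rw [← Nat.cast_mul, hsymm, Nat.cast_mul]
  calc _ ≤ (Fintype.card α + 1) * exp (-(tailRate η c * Fintype.card α)) *
        (Fintype.card α).choose (m i) * (#(partitionsWithSizes α m) : ℝ) := by
        gcongr
    _ = _ := by ring

theorem card_partitionsWithSizes_filter_not_forall_le (m : β → ℕ) (H : Finset (Finset α))
    (r : ℕ) {θ B : ℝ}
    (hB : ∀ i, ∀ X : Finset α, #X = r →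
      (#{φ ∈ partitionsWithSizes α m |
        (#(({v | φ v = i} : Finset α) ∩ neighborhood H X) : ℝ) < θ * m i} : ℝ) ≤ B) :
    (#{φ ∈ partitionsWithSizes α m | ¬ ∀ i, ∀ X : Finset α, #X = r →
        θ * m i ≤ (#(({v | φ v = i} : Finset α).filter fun v => insert v X ∈ H) : ℝ)} :
        ℝ) ≤
      Fintype.card β * (Fintype.card α).choose r * B := by
  have hcover : {φ ∈ partitionsWithSizes α m | ¬ ∀ i, ∀ X : Finset α, #X = r →
        θ * m i ≤ (#(({v | φ v = i} : Finset α).filter fun v => insert v X ∈ H) : ℝ)} ⊆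
      (univ ×ˢ powersetCard r univ).biUnion fun iX => {φ ∈ partitionsWithSizes α m |
        (#(({v | φ v = iX.1} : Finset α) ∩ neighborhood H iX.2) : ℝ) < θ * m iX.1} := by
    intro φ hφ
    simp only [mem_filter, not_forall, not_le] at hφ
    obtain ⟨hφ, i, X, hX, hlt⟩ := hφ
    refine mem_biUnion.2 ⟨(i, X), by simpa using hX, mem_filter.2 ⟨hφ, ?_⟩⟩
    rwa [neighborhood, inter_filter, inter_univ]
  calc _ ≤ ((∑ iX ∈ univ ×ˢ powersetCard r univ, #{φ ∈ partitionsWithSizes α m |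
        (#(({v | φ v = iX.1} : Finset α) ∩ neighborhood H iX.2) : ℝ) < θ * m iX.1} : ℕ) :
          ℝ) := by
        exact_mod_cast (card_le_card hcover).trans card_biUnion_le
    _ ≤ ∑ iX ∈ univ ×ˢ powersetCard r univ, B := by
        push_cast
        exact sum_le_sum fun iX hiX => hB iX.1 iX.2 (mem_powersetCard_univ.1 (mem_product.1 hiX).2)
    _ = _ := by simp [card_product, mul_assoc]

theorem card_partitionsWithSizes_filter_card_inter_neighborhood_lt_le {k : ℕ} (hk : 1 ≤ k)
    {δ ε c : ℝ} (hδ : 0 < δ) (hε : 0 < ε) (hc : 0 < c) {H : Finset (Finset α)}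
    (hH : ∀ f ∈ H, #f = k)
    (hdeg : ∀ A : Finset α, #A = k - 1 → (δ + ε) * Fintype.card α ≤ #{f ∈ H | A ⊆ f})
    {m : β → ℕ} (hm : ∀ i, c * Fintype.card α ≤ m i) (hsum : ∑ i, m i = Fintype.card α)
    (hlarge : 16 ≤ ε / 3 * c * Fintype.card α) (i : β) {X : Finset α} (hX : #X = k - 1) :
    (#{φ ∈ partitionsWithSizes α m |
        (#(({v | φ v = i} : Finset α) ∩ neighborhood H X) : ℝ) < (δ + 2 * ε / 3) * m i} :
        ℝ) ≤
      (Fintype.card α + 1) * exp (-(tailRate (ε / 3) c * Fintype.card α)) *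
        #(partitionsWithSizes α m) := by
  have hN : (δ + ε) * Fintype.card α ≤ #(neighborhood H X) := (hdeg X hX).trans <| by
    exact_mod_cast card_filter_subset_le_card_neighborhood fun f hf => by rw [hH f hf]; omega
  have hmn : m i ≤ Fintype.card α :=
    hsum ▸ single_le_sum (fun _ _ => Nat.zero_le _) (mem_univ i)
  have := card_partitionsWithSizes_filter_card_inter_lt_le i (by positivity) hc
    (by linarith : ε / 3 ≤ δ + ε) hN (hm i) hmn hlarge
  rwa [show δ + ε - ε / 3 = δ + 2 * ε / 3 by ring] at this

theorem card_partitionsWithSizes_filter_not_forall_le_exp {k : ℕ} (hk : 1 ≤ k)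
    {δ ε c : ℝ} (hδ : 0 < δ) (hε : 0 < ε) (hc : 0 < c) {H : Finset (Finset α)}
    (hH : ∀ f ∈ H, #f = k)
    (hdeg : ∀ A : Finset α, #A = k - 1 → (δ + ε) * Fintype.card α ≤ #{f ∈ H | A ⊆ f})
    {m : β → ℕ} (hm : ∀ i, c * Fintype.card α ≤ m i) (hsum : ∑ i, m i = Fintype.card α)
    (hlarge : 16 ≤ ε / 3 * c * Fintype.card α)
    (hpoly : ((Fintype.card α : ℝ) + 1) ^ k ≤
      c * exp (tailRate (ε / 3) c / 2 * Fintype.card α)) :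
    (#{φ ∈ partitionsWithSizes α m | ¬ ∀ i, ∀ X : Finset α, #X = k - 1 →
        (δ + 2 * ε / 3) * m i ≤
          (#(({v | φ v = i} : Finset α).filter fun v => insert v X ∈ H) : ℝ)} : ℝ) ≤
      exp (-(tailRate (ε / 3) c / 2) * Fintype.card α) * #(partitionsWithSizes α m) := by
  set n := Fintype.card α
  set ρ := tailRate (ε / 3) c
  set V := (#(partitionsWithSizes α m) : ℝ)
  have hn : 0 < n := Nat.pos_of_ne_zero (by rintro h; rw [h] at hlarge; norm_num at hlarge)
  have ht := card_mul_le_one_of_sum_eq hn hm hsum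
  have hchoose : (n.choose (k - 1) : ℝ) * (n + 1) ≤ (n + 1) ^ k := by
    calc (n.choose (k - 1) : ℝ) * (n + 1) ≤ (n + 1) ^ (k - 1) * (n + 1) := by
          gcongr
          exact_mod_cast (Nat.choose_le_pow n (k - 1)).trans (Nat.pow_le_pow_left n.le_succ _)
      _ = (n + 1) ^ k := by rw [← pow_succ, Nat.sub_add_cancel hk]
  have hfactor : Fintype.card β * n.choose (k - 1) * (n + 1) ≤ exp (ρ / 2 * n) := by
    refine le_of_mul_le_mul_left ?_ hc
    calc c * (Fintype.card β * n.choose (k - 1) * (n + 1))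
        = Fintype.card β * c * (n.choose (k - 1) * (n + 1)) := by ring
      _ ≤ 1 * (n + 1) ^ k := by gcongr
      _ ≤ c * exp (ρ / 2 * n) := by rw [one_mul]; exact hpoly
  refine (card_partitionsWithSizes_filter_not_forall_le m H (k - 1) fun i X hX =>
    card_partitionsWithSizes_filter_card_inter_neighborhood_lt_le hk hδ hε hc hH hdeg hm hsum
      hlarge i hX).trans ?_
  calc _ = Fintype.card β * n.choose (k - 1) * (n + 1) * exp (-(ρ * n)) * V := by ring
    _ ≤ exp (ρ / 2 * n) * exp (-(ρ * n)) * V := by gcongr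
    _ = _ := by rw [← exp_add]; ring_nf

end Partitions

theorem eventually_add_one_pow_le_mul_exp {C a : ℝ} (hC : 0 < C) (ha : 0 < a) (k : ℕ) :
    ∀ᶠ n : ℕ in Filter.atTop, ((n : ℝ) + 1) ^ k ≤ C * exp (a * n) := by
  have hlittle := (isLittleO_pow_exp_pos_mul_atTop k ha).comp_tendsto
    (Filter.tendsto_atTop_add_const_right _ 1 tendsto_natCast_atTop_atTop)
  filter_upwards [hlittle.bound (by positivity : 0 < C * exp (-a))] with n hn
  simp only [Function.comp_apply, Real.norm_eq_abs, abs_of_pos (exp_pos _),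
    abs_of_nonneg (by positivity : (0 : ℝ) ≤ (n + 1) ^ k)] at hn
  calc _ ≤ C * exp (-a) * exp (a * (n + 1)) := hn
    _ = C * exp (a * n) := by rw [mul_assoc, ← exp_add]; ring_nf

open scoped Classical in
theorem random_partition_degrees (k : ℕ) (hk : 1 ≤ k)
    (δ ε c : ℝ) (hδ : 0 < δ) (hε : 0 < ε) (hc : 0 < c) :
    ∃ c' : ℝ, 0 < c' ∧ ∃ n₀ : ℕ, ∀ n : ℕ, n₀ ≤ n →
      ∀ H : Finset (Finset (Fin n)), (∀ f ∈ H, f.card = k) →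
      (∀ A : Finset (Fin n), A.card = k - 1 →
        (δ + ε) * n ≤ ((H.filter (fun f => A ⊆ f)).card : ℝ)) →
      ∀ t : ℕ, ∀ m : Fin t → ℕ,
        (∀ i, 0 < m i) → (∀ i, c * n ≤ (m i : ℝ)) → (∑ i, m i = n) →
        -- ordered partitions `V(H) = V₁ ∪ ⋯ ∪ V_t` with `|V_i| = m i`, encoded as
        -- functions `φ : Fin n → Fin t` whose fibers have the prescribed sizes
        ((((Finset.univ : Finset (Fin n → Fin t)).filter
              (fun φ => ∀ i, (Finset.univ.filter (fun v => φ v = i)).card = m i)).filter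
            (fun φ => ¬ ∀ i : Fin t, ∀ X : Finset (Fin n), X.card = k - 1 →
              (δ + 2 * ε / 3) * (m i : ℝ) ≤
                (((Finset.univ.filter (fun v => φ v = i)).filter
                  (fun v => insert v X ∈ H)).card : ℝ))).card : ℝ)
          ≤ Real.exp (-c' * n) *
            (((Finset.univ : Finset (Fin n → Fin t)).filter
              (fun φ => ∀ i, (Finset.univ.filter (fun v => φ v = i)).card = m i)).card : ℝ) := by
  set ρ := tailRate (ε / 3) c
  have hρ : 0 < ρ := tailRate_pos (by positivity) hc
  obtain ⟨n₀, hn₀⟩ := Filter.eventually_atTop.1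
    ((Filter.eventually_ge_atTop ⌈48 / (ε * c)⌉₊).and
      (eventually_add_one_pow_le_mul_exp hc (half_pos hρ) k))
  refine ⟨ρ / 2, half_pos hρ, n₀, fun n hn H hH hdeg t m _ hm hsum => ?_⟩
  obtain ⟨hn_large, hpoly⟩ := hn₀ n hn
  have hlarge : 16 ≤ ε / 3 * c * n := by
    have := (div_le_iff₀ (by positivity)).1 (Nat.ceil_le.1 hn_large)
    linarith
  have hbound := card_partitionsWithSizes_filter_not_forall_le_exp (α := Fin n) (β := Fin t)
    hk hδ hε hc hH (by simpa using hdeg) (by simpa using hm) (by simpa using hsum)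
    (by simpa using hlarge) (by simpa using hpoly)
  simp only [Fintype.card_fin] at hbound
  -- The statement decides `∀ i : Fin t` by `Nat.decidableForallFin`, `partitionsWithSizes` by
  -- `Fintype.decidableForallFintype`.
  convert hbound using 5 <;> exact (filter_congr_decidable _ _ _).symm
end

section
/- For every α > 1/2 there exist ε₀ > 0 and an integer n₀ such that for every n ≥ n₀ and every ε with 0 < ε ≤ ε₀ the following holds: if G is a bipartite graph with parts A and B both of size n in which every vertex has degree between (α−ε)n and (α+ε)n, then G contains an r-factor for every nonnegative integer r ≤ (α − 10√ε)n. -/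
/-!
By Hall's theorem, applied to a gadget that has every edge of `G` on both sides and `deg v - r`
slots at every vertex `v`, the graph `G` has an `r`-factor as soon as Ore's condition
`r |S| ≤ e(S, T) + r (n - |T|)` holds for all `S ⊆ A`, `T ⊆ B`. Put `m = |S| + |T| - n > 0`,
`|S| ≤ |T|` and `δ = (α - ε) n`. If `|S| ≤ δ`, counting the edges at `S` gives
`e(S, T) ≥ |S| (δ - (n - |T|)) ≥ r m`. Otherwise `|S|, |T| > δ`, so `m ≥ 2 √ε n`, and counting
degrees on both sides gives `e(S, T) ≥ α n m - ε n²`, which beats `r m ≤ (α - 10 √ε) n m`.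
-/

/-- Degree of a left vertex `a` in the bipartite graph with edge set `G ⊆ Fin n × Fin n`. -/
def degL (n : ℕ) (G : Finset (Fin n × Fin n)) (a : Fin n) : ℕ :=
  (G.filter (fun e => e.1 = a)).card

/-- Degree of a right vertex `b` in the bipartite graph with edge set `G ⊆ Fin n × Fin n`. -/
def degR (n : ℕ) (G : Finset (Fin n × Fin n)) (b : Fin n) : ℕ :=
  (G.filter (fun e => e.2 = b)).card

/-- `F` is an `r`-factor of the bipartite graph `G`: a spanning subgraph in which
every vertex (on either side) has degree exactly `r`. -/
def IsFactor (n : ℕ) (G F : Finset (Fin n × Fin n)) (r : ℕ) : Prop :=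
  F ⊆ G ∧ (∀ a : Fin n, degL n F a = r) ∧ (∀ b : Fin n, degR n F b = r)

open Finset Function

variable {n : ℕ}

def edgeCount (G : Finset (Fin n × Fin n)) (S T : Finset (Fin n)) : ℕ :=
  #{p ∈ G | p.1 ∈ S ∧ p.2 ∈ T}

def swapEdges (G : Finset (Fin n × Fin n)) : Finset (Fin n × Fin n) :=
  G.map (Equiv.prodComm (Fin n) (Fin n)).toEmbedding

-- Ore's criterion for `r`-factors: `r |S| ≤ e(S, T) + r |Tᶜ|` for all `S ⊆ A`, `T ⊆ B`.
def OreCondition (G : Finset (Fin n × Fin n)) (r : ℕ) : Prop :=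
  ∀ S T : Finset (Fin n), r * (#S + #T) ≤ r * n + edgeCount G S T

section Counting

variable (G : Finset (Fin n × Fin n))

lemma degL_swapEdges (b : Fin n) : degL n (swapEdges G) b = degR n G b := by
  rw [degL, degR, swapEdges, filter_map, card_map]
  rfl

lemma degR_swapEdges (a : Fin n) : degR n (swapEdges G) a = degL n G a := by
  rw [degL, degR, swapEdges, filter_map, card_map]
  rfl

lemma edgeCount_swapEdges (S T : Finset (Fin n)) :
    edgeCount (swapEdges G) T S = edgeCount G S T := by
  rw [edgeCount, edgeCount, swapEdges, filter_map, card_map]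
  simp only [comp_def, Equiv.coe_toEmbedding, Equiv.prodComm_apply, Prod.fst_swap, Prod.snd_swap,
    and_comm]

lemma sum_degL_eq_edgeCount_add (S T : Finset (Fin n)) :
    ∑ a ∈ S, degL n G a = edgeCount G S T + edgeCount G S Tᶜ := by
  simp only [degL, edgeCount, mem_compl]
  rw [sum_card_fiberwise_eq_card_filter, ← card_filter_add_card_filter_not (fun p => p.2 ∈ T),
    filter_filter, filter_filter]

lemma sum_degR_eq_edgeCount_add (S T : Finset (Fin n)) :
    ∑ b ∈ T, degR n G b = edgeCount G S T + edgeCount G Sᶜ T := by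
  simp only [← degL_swapEdges, ← edgeCount_swapEdges G _ T]
  exact sum_degL_eq_edgeCount_add _ T S

lemma sum_degL_univ : ∑ a, degL n G a = #G := by
  simp [sum_degL_eq_edgeCount_add G univ univ, edgeCount]

lemma sum_degR_univ : ∑ b, degR n G b = #G := by
  simp only [← degL_swapEdges, sum_degL_univ, swapEdges, card_map]

lemma edgeCount_le_card_mul (S T : Finset (Fin n)) : edgeCount G S T ≤ #S * #T := by
  rw [← card_product]
  exact card_le_card fun p hp => by simp_all [mem_product]

lemma edgeCount_le_sum_degR (S T : Finset (Fin n)) : edgeCount G S T ≤ ∑ b ∈ T, degR n G b := by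
  rw [sum_degR_eq_edgeCount_add G S T]
  exact Nat.le_add_right _ _

end Counting

lemma card_filter_attach {α : Type*} (s : Finset α) (p : α → Prop) [DecidablePred p] :
    #{x ∈ s.attach | p x.1} = #{x ∈ s | p x} := by
  rw [filter_attach, card_map, card_attach]

lemma forall_eq_of_sum_eq {ι : Type*} [Fintype ι] {f g : ι → ℕ} {r : ℕ} (hf : ∀ i, r ≤ f i)
    (hg : ∀ i, g i ≤ r) (hfg : ∑ i, f i = ∑ i, g i) : (∀ i, f i = r) ∧ ∀ i, g i = r := by
  have hr : ∑ i, f i = ∑ _i : ι, r :=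
    le_antisymm (hfg ▸ sum_le_sum fun i _ => hg i) (sum_le_sum fun i _ => hf i)
  have hr' : ∑ _i : ι, r = ∑ i, g i := hr.symm.trans hfg
  exact ⟨fun i => ((sum_eq_sum_iff_of_le fun i _ => hf i).mp hr.symm i (mem_univ i)).symm,
    fun i => (sum_eq_sum_iff_of_le fun i _ => hg i).mp hr'.symm i (mem_univ i)⟩

lemma degL_map_filter_add (G : Finset (Fin n × Fin n)) (P : {p // p ∈ G} → Prop) [DecidablePred P]
    (a : Fin n) :
    degL n ({e ∈ G.attach | P e}.map (Embedding.subtype _)) a + #{e ∈ G.attach | e.1.1 = a ∧ ¬P e}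
      = degL n G a := by
  have hF : degL n ({e ∈ G.attach | P e}.map (Embedding.subtype _)) a
      = #{e ∈ {e ∈ G.attach | e.1.1 = a} | P e} := by
    rw [degL, filter_map, card_map, filter_filter, filter_filter]
    exact congrArg card (filter_congr fun e _ => and_comm)
  rw [hF, degL, ← card_filter_attach G (·.1 = a),
    ← card_filter_add_card_filter_not P (s := {e ∈ G.attach | e.1.1 = a})]
  simp only [filter_filter]

lemma degR_map_filter_add (G : Finset (Fin n × Fin n)) (P : {p // p ∈ G} → Prop) [DecidablePred P]
    (b : Fin n) :
    degR n ({e ∈ G.attach | P e}.map (Embedding.subtype _)) b + #{e ∈ G.attach | e.1.2 = b ∧ ¬P e}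
      = degR n G b := by
  have hF : degR n ({e ∈ G.attach | P e}.map (Embedding.subtype _)) b
      = #{e ∈ {e ∈ G.attach | e.1.2 = b} | P e} := by
    rw [degR, filter_map, card_map, filter_filter, filter_filter]
    exact congrArg card (filter_congr fun e _ => and_comm)
  rw [hF, degR, ← card_filter_attach G (·.2 = b),
    ← card_filter_add_card_filter_not P (s := {e ∈ G.attach | e.1.2 = b})]
  simp only [filter_filter]

section OreCondition

variable {G : Finset (Fin n × Fin n)} {r : ℕ}

lemma OreCondition.le_degL (hG : OreCondition G r) (a : Fin n) : r ≤ degL n G a := by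
  have h := hG {a} univ
  simp only [card_singleton, card_univ, Fintype.card_fin, edgeCount, mem_singleton, mem_univ,
    and_true] at h
  rw [degL]
  nlinarith

lemma OreCondition.le_degR (hG : OreCondition G r) (b : Fin n) : r ≤ degR n G b := by
  have h := hG univ {b}
  simp only [card_singleton, card_univ, Fintype.card_fin, edgeCount, mem_singleton, mem_univ,
    true_and] at h
  rw [degR]
  nlinarith

end OreCondition

namespace FactorGadget

variable (G : Finset (Fin n × Fin n)) (r : ℕ)

abbrev Left := {p // p ∈ G} ⊕ (Σ b : Fin n, Fin (degR n G b - r))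

abbrev Right := {p // p ∈ G} ⊕ (Σ a : Fin n, Fin (degL n G a - r))

def Adj : Left G r → Right G r → Prop
  | .inl e, .inl e' => e = e'
  | .inl e, .inr x => x.1 = e.1.1
  | .inr y, .inl e' => e'.1.2 = y.1
  | .inr _, .inr _ => False

instance : DecidableRel (Adj G r)
  | .inl e, .inl e' => inferInstanceAs (Decidable (e = e'))
  | .inl e, .inr x => inferInstanceAs (Decidable (x.1 = e.1.1))
  | .inr y, .inl e' => inferInstanceAs (Decidable (e'.1.2 = y.1))
  | .inr _, .inr _ => inferInstanceAs (Decidable False)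

variable {G r}

lemma disjSum_subset_neighbors (X : Finset (Left G r)) :
    ((X.toLeft ∪ {e ∈ G.attach | e.1.2 ∈ X.toRight.image (·.1)}).disjSum
      ((X.toLeft.image (·.1.1)).sigma fun _ => univ) : Finset (Right G r)) ⊆
      ({y | ∃ x ∈ X, Adj G r x y} : Finset (Right G r)) := by
  intro y hy
  simp only [mem_disjSum, mem_union, mem_filter, mem_image, mem_sigma, mem_toLeft, mem_toRight,
    mem_attach, true_and, mem_univ, and_true] at hy
  simp only [mem_filter, mem_univ, true_and]
  rcases hy with ⟨e, he | ⟨x, hx, hxe⟩, rfl⟩ | ⟨⟨a, i⟩, ⟨e, he, hea⟩, rfl⟩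
  · exact ⟨.inl e, he, rfl⟩
  · exact ⟨.inr x, hx, hxe.symm⟩
  · exact ⟨.inl e, he, hea.symm⟩

lemma card_le_card_neighbors (hG : OreCondition G r) (X : Finset (Left G r)) :
    #X ≤ #{y | ∃ x ∈ X, Adj G r x y} := by
  -- The neighbours of `X` include its edges, the edges at the owners `U` of its slots and the
  -- slots at the left ends `S` of its edges; Ore's condition for `(S, Uᶜ)` pays for the overlap.
  set S := X.toLeft.image (·.1.1)
  set U := X.toRight.image (·.1)
  set Q := {e ∈ G.attach | e.1.2 ∈ U}
  have hQ : #Q = ∑ b ∈ U, degR n G b := by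
    rw [card_filter_attach G (·.2 ∈ U)]
    exact (sum_card_fiberwise_eq_card_filter _ _ _).symm
  have hXQ : #(X.toLeft ∩ Q) ≤ edgeCount G S U := by
    refine card_le_card_of_injOn Subtype.val (fun e he => ?_) Subtype.val_injective.injOn
    simp only [coe_inter, Set.mem_inter_iff, mem_coe, Q, mem_filter] at he
    simp only [coe_filter, Set.mem_ofPred_eq]
    exact ⟨e.2, mem_image_of_mem _ he.1, he.2.2⟩
  have hXR : #X.toRight ≤ ∑ b ∈ U, (degR n G b - r) := by
    refine (card_le_card (t := U.sigma fun b => (univ : Finset (Fin (degR n G b - r))))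
      fun y hy => mem_sigma.mpr ⟨mem_image_of_mem _ hy, mem_univ _⟩).trans ?_
    simp [card_sigma]
  have hslotsU : ∑ b ∈ U, (degR n G b - r) + r * #U = ∑ b ∈ U, degR n G b := by
    rw [mul_comm r, ← smul_eq_mul, ← sum_const, ← sum_add_distrib]
    exact sum_congr rfl fun b _ => Nat.sub_add_cancel (hG.le_degR b)
  have hslotsS : ∑ a ∈ S, degL n G a ≤ ∑ a ∈ S, (degL n G a - r) + r * #S := by
    rw [mul_comm r, ← smul_eq_mul, ← sum_const, ← sum_add_distrib]
    exact sum_le_sum fun a _ => le_tsub_add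
  have hU : r * #Uᶜ + r * #U = r * n := by
    rw [← mul_add, card_compl_add_card, Fintype.card_fin]
  have hOre := hG S Uᶜ
  have hS := sum_degL_eq_edgeCount_add G S U
  have hunion := card_union_add_card_inter X.toLeft Q
  calc #X = #X.toLeft + #X.toRight := card_toLeft_add_card_toRight.symm
    _ ≤ #(X.toLeft ∪ Q) + #(S.sigma fun a => (univ : Finset (Fin (degL n G a - r)))) := by
      simp only [card_sigma, card_univ, Fintype.card_fin]
      linarith
    _ = _ := (card_disjSum _ _).symm
    _ ≤ _ := card_le_card (disjSum_subset_neighbors X)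

section Matching

variable (f : Left G r → Right G r)

def selfMatched : Finset (Fin n × Fin n) :=
  {e ∈ G.attach | f (.inl e) = .inl e}.map (Embedding.subtype _)

variable {f}

lemma card_unmatched_le (hf : Injective f) (hadj : ∀ x, Adj G r x (f x)) (a : Fin n) :
    #{e ∈ G.attach | e.1.1 = a ∧ ¬f (.inl e) = .inl e} ≤ degL n G a - r := by
  calc _ ≤ #((univ.map ((Embedding.sigmaMk a).trans Embedding.inr) : Finset (Right G r))) := by
        refine card_le_card_of_injOn (fun e => f (.inl e)) (fun e he => ?_)
          (hf.comp Sum.inl_injective).injOn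
        simp only [coe_filter, Set.mem_ofPred_eq, mem_attach, true_and] at he
        have h := hadj (.inl e)
        simp only [coe_map, Embedding.trans_apply, Embedding.sigmaMk_apply, Embedding.inr_apply]
        rcases hfe : f (.inl e) with e' | ⟨a', i⟩
        · rw [hfe] at h he
          exact absurd (congrArg Sum.inl h.symm) he.2
        · rw [hfe] at h
          obtain rfl : a' = a := h.trans he.1
          exact ⟨i, by simp, rfl⟩
    _ = degL n G a - r := by simp

lemma le_card_unmatched (hf : Injective f) (hadj : ∀ x, Adj G r x (f x)) (b : Fin n) :
    degR n G b - r ≤ #{e ∈ G.attach | e.1.2 = b ∧ ¬f (.inl e) = .inl e} := by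
  calc degR n G b - r = #(univ : Finset (Fin (degR n G b - r))) := by simp
    _ ≤ #({e ∈ G.attach | e.1.2 = b ∧ ¬f (.inl e) = .inl e}.map Embedding.inl) := by
        refine card_le_card_of_injOn (fun i => f (.inr ⟨b, i⟩)) (fun i _ => ?_)
          fun i _ j _ h => by simpa using hf h
        have h := hadj (.inr ⟨b, i⟩)
        simp only [coe_map, coe_filter, mem_attach, true_and, Set.mem_image, Set.mem_ofPred_eq,
          Embedding.inl_apply]
        rcases hfi : f (.inr ⟨b, i⟩) with e | y
        · rw [hfi] at h
          refine ⟨e, ⟨h, fun hfe => ?_⟩, rfl⟩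
          exact Sum.inl_ne_inr (hf (hfe.trans hfi.symm))
        · rw [hfi] at h
          exact h.elim
    _ = _ := card_map _

lemma isFactor_selfMatched (hG : OreCondition G r) (hf : Injective f)
    (hadj : ∀ x, Adj G r x (f x)) : IsFactor n G (selfMatched f) r := by
  -- Injectivity alone gives `r ≤ degL` and `degR ≤ r`; the equal totals force equality.
  have hL (a : Fin n) : r ≤ degL n (selfMatched f) a := by
    have := degL_map_filter_add G (fun e => f (.inl e) = .inl e) a
    have := card_unmatched_le hf hadj a
    have := hG.le_degL a
    rw [selfMatched]
    omega
  have hR (b : Fin n) : degR n (selfMatched f) b ≤ r := by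
    have := degR_map_filter_add G (fun e => f (.inl e) = .inl e) b
    have := le_card_unmatched hf hadj b
    rw [selfMatched]
    omega
  refine ⟨fun p hp => ?_, forall_eq_of_sum_eq hL hR (by rw [sum_degL_univ, sum_degR_univ])⟩
  obtain ⟨e, -, rfl⟩ := mem_map.mp hp
  exact e.2

end Matching

end FactorGadget

theorem exists_isFactor_of_oreCondition {G : Finset (Fin n × Fin n)} {r : ℕ}
    (hG : OreCondition G r) : ∃ F, IsFactor n G F r := by
  obtain ⟨f, hf, hadj⟩ := (Fintype.all_card_le_filter_rel_iff_exists_injective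
    (FactorGadget.Adj G r)).mp (FactorGadget.card_le_card_neighbors hG)
  exact ⟨_, FactorGadget.isFactor_selfMatched hG hf hadj⟩

lemma le_edgeCount_add_of_degree_bounds (G : Finset (Fin n × Fin n)) {δ Δ : ℝ}
    (hL : ∀ a, δ ≤ degL n G a) (hR : ∀ b, degR n G b ≤ Δ) (S T : Finset (Fin n)) :
    δ * #S ≤ edgeCount G S T + #S * (n - #T) ∧ δ * #S ≤ edgeCount G S T + (n - #T) * Δ := by
  have hsum : δ * #S ≤ edgeCount G S T + edgeCount G S Tᶜ :=
    calc δ * #S = #S • δ := by rw [nsmul_eq_mul, mul_comm]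
      _ ≤ ∑ a ∈ S, (degL n G a : ℝ) := card_nsmul_le_sum _ _ _ fun a _ => hL a
      _ = edgeCount G S T + edgeCount G S Tᶜ := by exact_mod_cast sum_degL_eq_edgeCount_add G S T
  have hcompl : (#Tᶜ : ℝ) = n - #T := by
    rw [eq_sub_iff_add_eq]
    exact_mod_cast (card_compl_add_card T).trans (Fintype.card_fin n)
  have hprod : (edgeCount G S Tᶜ : ℝ) ≤ #S * #Tᶜ := by exact_mod_cast edgeCount_le_card_mul G S Tᶜ
  have hdeg : (edgeCount G S Tᶜ : ℝ) ≤ #Tᶜ * Δ :=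
    calc (edgeCount G S Tᶜ : ℝ) ≤ ∑ b ∈ Tᶜ, (degR n G b : ℝ) := by
          exact_mod_cast edgeCount_le_sum_degR G S Tᶜ
      _ ≤ #Tᶜ • Δ := sum_le_card_nsmul _ _ _ fun b _ => hR b
      _ = #Tᶜ * Δ := nsmul_eq_mul _ _
  rw [hcompl] at hprod hdeg
  exact ⟨by linarith, by linarith⟩

lemma mul_add_le_of_edge_estimates (α ε n s t e r : ℝ) (hε0 : 0 ≤ ε) (hε1 : ε ≤ 1)
    (hεα : √ε ≤ (α - 1 / 2) / 2) (hn : 0 ≤ n) (hst : s ≤ t) (ht : t ≤ n) (he0 : 0 ≤ e) (hr0 : 0 ≤ r)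
    (hr : r ≤ (α - 10 * √ε) * n) (hS : (α - ε) * n * s ≤ e + s * (n - t))
    (hS' : (α - ε) * n * s ≤ e + (n - t) * ((α + ε) * n))
    (hT' : (α - ε) * n * t ≤ e + (n - s) * ((α + ε) * n)) :
    r * (s + t) ≤ r * n + e := by
  set q := √ε
  have hqq : q * q = ε := Real.mul_self_sqrt hε0
  have hq0 : 0 ≤ q := Real.sqrt_nonneg ε
  have hεq : ε ≤ q := by nlinarith [Real.sqrt_le_one.mpr hε1]
  set δ := (α - ε) * n
  have hrδ : r ≤ δ := hr.trans (mul_le_mul_of_nonneg_right (by linarith) hn)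
  rcases le_or_gt (s + t) n with hm | hm
  · nlinarith [mul_le_mul_of_nonneg_left hm hr0]
  rcases le_or_gt s δ with hsδ | hsδ
  · -- `hS` says `e ≥ s (δ - (n - t))`, and `s (δ - (n - t)) - r m = m (δ - r) + (n - t) (δ - s)`
    -- with `m = s + t - n`.
    nlinarith [mul_nonneg (sub_nonneg.mpr hm.le) (sub_nonneg.mpr hrδ),
      mul_nonneg (sub_nonneg.mpr ht) (sub_nonneg.mpr hsδ)]
  · have he : α * n * (s + t - n) - ε * n * n ≤ e := by nlinarith
    have hm2 : 2 * q * n ≤ s + t - n := by nlinarith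
    have hεn : q * q * (n * n) = ε * (n * n) := by rw [hqq]
    nlinarith [mul_le_mul_of_nonneg_right hr (by linarith : 0 ≤ s + t - n),
      mul_le_mul_of_nonneg_left hm2 (mul_nonneg hq0 hn), mul_nonneg hε0 (mul_nonneg hn hn)]

lemma oreCondition_of_degree_bounds {α ε : ℝ} (hε0 : 0 ≤ ε) (hε1 : ε ≤ 1)
    (hεα : √ε ≤ (α - 1 / 2) / 2) (G : Finset (Fin n × Fin n))
    (hL : ∀ a, (α - ε) * n ≤ (degL n G a : ℝ) ∧ (degL n G a : ℝ) ≤ (α + ε) * n)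
    (hR : ∀ b, (α - ε) * n ≤ (degR n G b : ℝ) ∧ (degR n G b : ℝ) ≤ (α + ε) * n)
    {r : ℕ} (hr : (r : ℝ) ≤ (α - 10 * √ε) * n) : OreCondition G r := by
  intro S T
  have hS := le_edgeCount_add_of_degree_bounds G (fun a => (hL a).1) (fun b => (hR b).2) S T
  have hT := le_edgeCount_add_of_degree_bounds (swapEdges G)
    (fun b => (degL_swapEdges G b).symm ▸ (hR b).1)
    (fun a => (degR_swapEdges G a).symm ▸ (hL a).2) T S
  rw [edgeCount_swapEdges] at hT
  have hcard (U : Finset (Fin n)) : (#U : ℝ) ≤ n := by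
    exact_mod_cast (card_le_univ U).trans_eq (Fintype.card_fin n)
  suffices (r : ℝ) * (#S + #T) ≤ r * n + edgeCount G S T by exact_mod_cast this
  rcases le_total #S #T with h | h
  · exact mul_add_le_of_edge_estimates α ε n _ _ _ _ hε0 hε1 hεα n.cast_nonneg (by exact_mod_cast h)
      (hcard T) (Nat.cast_nonneg _) r.cast_nonneg hr hS.1 hS.2 hT.2
  · rw [add_comm (#S : ℝ)]
    exact mul_add_le_of_edge_estimates α ε n _ _ _ _ hε0 hε1 hεα n.cast_nonneg (by exact_mod_cast h)
      (hcard S) (Nat.cast_nonneg _) r.cast_nonneg hr hT.1 hT.2 hS.2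

theorem factor_in_almost_regular (α : ℝ) (hα : 1 / 2 < α) :
    ∃ ε₀ : ℝ, 0 < ε₀ ∧ ∃ n₀ : ℕ, ∀ n : ℕ, n₀ ≤ n →
      ∀ ε : ℝ, 0 < ε → ε ≤ ε₀ →
      ∀ G : Finset (Fin n × Fin n),
        (∀ a : Fin n, (α - ε) * n ≤ (degL n G a : ℝ) ∧ (degL n G a : ℝ) ≤ (α + ε) * n) →
        (∀ b : Fin n, (α - ε) * n ≤ (degR n G b : ℝ) ∧ (degR n G b : ℝ) ≤ (α + ε) * n) →
        ∀ r : ℕ, (r : ℝ) ≤ (α - 10 * Real.sqrt ε) * n →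
          ∃ F, IsFactor n G F r := by
  refine ⟨min (((α - 1 / 2) / 2) ^ 2) 1, by positivity, 0, fun n _ ε hε hεε₀ G hL hR r hr => ?_⟩
  have hεα : √ε ≤ (α - 1 / 2) / 2 :=
    calc √ε ≤ √(((α - 1 / 2) / 2) ^ 2) := Real.sqrt_le_sqrt (hεε₀.trans (min_le_left _ _))
      _ = (α - 1 / 2) / 2 := Real.sqrt_sq (by linarith)
  exact exists_isFactor_of_oreCondition <| oreCondition_of_degree_bounds hε.le
    (hεε₀.trans (min_le_right _ _)) hεα G hL hR hr
end

section
/- Let k and ℓ be integers with 1 ≤ ℓ < k/2 and let n be divisible by k−ℓ with n ≥ 3(k−ℓ). Then the number of Hamilton ℓ-cycles in the complete k-uniform hypergraph on n vertices (whose edges are all k-element subsets of the vertex set) equals (n−1)! · (k−ℓ)/2 · (ℓ! · (k−2ℓ)!)^{−n/(k−ℓ)}. -/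
/-!
Every Hamilton `ℓ`-cycle of the complete hypergraph is the image of one standard cycle under a
bijection, so by orbit–stabilizer there are `n! / |Aut|` of them, `Aut` being the group of
permutations of the vertices that map the standard cycle to itself.

Put `d = k - ℓ`, `m = n / d`, take the vertex set `ZMod m × Fin d` (vertex `(t, j)` sits at
position `d t + j` of the cyclic order) and let edge `t` be block `t` together with the first `ℓ`
vertices of block `t + 1`. Two edges meet iff they are consecutive (`m ≥ 3`), so an automorphism
permutes the edges along a dihedral symmetry of `ZMod m`; each of the `2m` symmetries is induced,
and the automorphisms inducing a fixed one form a coset of those fixing every edge. The latter are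
the permutations preserving each of the `2m` classes "first `ℓ` / last `d - ℓ` vertices of
block `t`", so there are `(ℓ! (d - ℓ)!)^m` of them and `|Aut| = 2m (ℓ! (d - ℓ)!)^m`.
-/

/-- `C` is a Hamilton `l`-cycle of the `k`-uniform hypergraph `H` on vertex set `Fin n`. -/
def IsHamiltonCycle (n k l : ℕ) (H C : Finset (Finset (Fin n))) : Prop :=
  C ⊆ H ∧ C.card = n / (k - l) ∧
    ∃ v : ZMod n → Fin n, Function.Bijective v ∧
      C = (Finset.range (n / (k - l))).image (fun i =>
        (Finset.range k).image (fun j => v ((i * (k - l) + j : ℕ) : ZMod n)))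

open Finset Function Equiv

theorem one_ne_zero_of_two_ne_zero {R : Type*} [NonAssocSemiring R] (h2 : (2 : R) ≠ 0) :
    (1 : R) ≠ 0 := fun h => h2 (by rw [← one_add_one_eq_two, h, add_zero])

theorem image_image_equiv_trans {α β γ : Type*} [DecidableEq β] [DecidableEq γ]
    (E : Finset (Finset α)) (σ : α ≃ β) (e : β ≃ γ) :
    E.image (image (σ.trans e)) = (E.image (image σ)).image (image e) := by
  rw [Finset.image_image]
  exact image_congr fun s _ => by simp [Finset.image_image, Function.comp_def]

theorem card_image_equiv_mul_card_stabilizer {α β : Type*} [Fintype α] [DecidableEq α]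
    [Fintype β] [DecidableEq β] (E : Finset (Finset α)) :
    #(univ.image fun f : α ≃ β => E.image (image f)) *
      #{σ : Perm α | E.image (image σ) = E} = Fintype.card (α ≃ β) := by
  set Φ := fun f : α ≃ β => E.image (image f)
  set stab : Finset (Perm α) := {σ | E.image (image σ) = E}
  have hfiber (e : α ≃ β) : ({f | Φ f = Φ e} : Finset (α ≃ β)) = stab.image (·.trans e) := by
    ext f
    simp only [Φ, stab, mem_filter, mem_univ, true_and, mem_image]
    constructor
    · intro hf
      refine ⟨f.trans e.symm, ?_, by ext; simp⟩
      apply image_injective (image_injective e.injective)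
      rw [← image_image_equiv_trans, Equiv.trans_assoc, Equiv.symm_trans_self,
        Equiv.trans_refl, hf]
    · rintro ⟨σ, hσ, rfl⟩
      rw [image_image_equiv_trans, hσ]
  calc #(univ.image Φ) * #stab = ∑ C ∈ univ.image Φ, #stab := by rw [sum_const, smul_eq_mul]
    _ = ∑ C ∈ univ.image Φ, #{f | Φ f = C} := by
        refine sum_congr rfl fun C hC => ?_
        obtain ⟨e, -, rfl⟩ := mem_image.mp hC
        rw [hfiber, card_image_of_injective _ fun σ σ' h =>
          Equiv.ext fun x => e.injective (Equiv.congr_fun h x)]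
    _ = Fintype.card (α ≃ β) := by rw [← card_eq_sum_card_image, card_univ]

section Relabels

variable {α ι : Type*} [DecidableEq α]

theorem Equiv.Perm.mem_finset_image_iff {τ : Perm α} {s : Finset α} {y : α} :
    y ∈ s.image τ ↔ τ.symm y ∈ s := by
  rw [← τ.apply_symm_apply y, τ.injective.mem_finset_image, τ.apply_symm_apply]

theorem Equiv.Perm.finset_image_eq_self_iff {τ : Perm α} {s : Finset α} :
    s.image τ = s ↔ ∀ x, τ x ∈ s ↔ x ∈ s := by
  constructor
  · intro h x
    conv_lhs => rw [← h]
    exact τ.injective.mem_finset_image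
  · intro h
    ext y
    rw [mem_finset_image_iff, ← h, τ.apply_symm_apply]

def Relabels (B : ι → Finset α) (τ : Perm α) (π : ι → ι) : Prop :=
  ∀ t, (B t).image τ = B (π t)

instance [Fintype ι] (B : ι → Finset α) (τ : Perm α) (π : ι → ι) :
    Decidable (Relabels B τ π) :=
  inferInstanceAs (Decidable (∀ _, _))

theorem Relabels.injective {B : ι → Finset α} {τ : Perm α} {π : ι → ι} (hB : Injective B)
    (h : Relabels B τ π) : Injective π := fun s t hst =>
  hB (image_injective τ.injective (by rw [h s, h t, hst]))

theorem Relabels.mul_iff {B : ι → Finset α} {τ τ' : Perm α} {π : ι → ι}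
    (hτ : Relabels B τ π) : Relabels B (τ * τ') π ↔ Relabels B τ' id := by
  refine forall_congr' fun t => ?_
  rw [Perm.coe_mul, ← Finset.image_image, ← hτ t, id]
  exact (image_injective τ.injective).eq_iff

variable [Fintype α] [Fintype ι]

theorem card_relabels_eq_of_relabels {B : ι → Finset α} {τ₀ : Perm α} {π : ι → ι}
    (hτ₀ : Relabels B τ₀ π) : #{τ | Relabels B τ π} = #{τ | Relabels B τ id} := by
  refine card_nbij' (τ₀⁻¹ * ·) (τ₀ * ·) (fun τ hτ => ?_) (fun τ hτ => ?_) (fun τ _ => ?_)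
    (fun τ _ => ?_)
  · simp only [mem_coe, mem_filter, mem_univ, true_and] at hτ ⊢
    rwa [← hτ₀.mul_iff, mul_inv_cancel_left]
  · simp only [mem_coe, mem_filter, mem_univ, true_and] at hτ ⊢
    exact hτ₀.mul_iff.mpr hτ
  · simp
  · simp

variable [DecidableEq ι]

theorem stabilizer_image_eq_biUnion {B : ι → Finset α} :
    ({τ | (univ.image B).image (image τ) = univ.image B} : Finset (Perm α)) =
      univ.biUnion fun π : ι → ι => {τ | Relabels B τ π} := by
  ext τ
  simp only [mem_filter, mem_univ, true_and, mem_biUnion]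
  constructor
  · intro hτ
    have (t : ι) : ∃ s, B s = (B t).image τ := by
      have h := mem_image_of_mem (image τ) (mem_image_of_mem B (mem_univ t))
      rw [hτ] at h
      obtain ⟨s, -, hs⟩ := mem_image.mp h
      exact ⟨s, hs⟩
    choose π hπ using this
    exact ⟨π, fun t => (hπ t).symm⟩
  · rintro ⟨π, hπ⟩
    refine eq_of_subset_of_card_le (fun C hC => ?_)
      (card_image_of_injective _ (image_injective τ.injective)).ge
    obtain ⟨_, hs, rfl⟩ := mem_image.mp hC
    obtain ⟨t, -, rfl⟩ := mem_image.mp hs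
    rw [hπ t]
    exact mem_image_of_mem _ (mem_univ _)

theorem card_stabilizer_image {B : ι → Finset α} (hB : Injective B) :
    #{τ : Perm α | (univ.image B).image (image τ) = univ.image B} =
      #{π : ι → ι | ∃ τ, Relabels B τ π} * #{τ | Relabels B τ id} := by
  rw [stabilizer_image_eq_biUnion, card_biUnion, ← smul_eq_mul, ← sum_const, sum_filter]
  · refine sum_congr rfl fun π _ => ?_
    split_ifs with h
    · exact card_relabels_eq_of_relabels h.choose_spec
    · simpa using h
  · intro π _ π' _ hne
    refine disjoint_left.mpr fun τ hπ hπ' => hne (funext fun t => hB ?_)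
    simp only [mem_filter] at hπ hπ'
    rw [← hπ.2 t, hπ'.2 t]

end Relabels

section Dihedral

variable {m : ℕ} [NeZero m]

theorem ZMod.eq_add_mul_of_add_one {f : ZMod m → ZMod m} {c : ZMod m}
    (hf : ∀ t, f (t + 1) = f t + c) (t : ZMod m) : f t = f 0 + t * c := by
  obtain ⟨k, rfl⟩ := ZMod.natCast_zmod_surjective t
  induction k with
  | zero => simp
  | succ k ih => push_cast; rw [hf, ih]; ring

theorem ZMod.exists_eq_add_mul_of_adjacent (h2 : (2 : ZMod m) ≠ 0)
    {π : ZMod m → ZMod m} (hπ : Injective π)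
    (hadj : ∀ t, π (t + 1) = π t + 1 ∨ π t = π (t + 1) + 1) :
    ∃ ε ∈ ({1, -1} : Finset (ZMod m)), ∀ t, π t = π 0 + t * ε := by
  set δ := fun t => π (t + 1) - π t
  have hδ (t : ZMod m) : δ t = 1 ∨ δ t = -1 := by
    rcases hadj t with h | h
    · left; simp only [δ]; linear_combination h
    · right; simp only [δ]; linear_combination -h
  -- two opposite consecutive steps would make `π` take the same value at `t` and `t + 2`
  have hδ_const (t : ZMod m) : δ (t + 1) = δ t + 0 := by
    have hback (h : π (t + 1 + 1) = π t) : False := h2 (by linear_combination hπ h)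
    simp only [δ] at hδ ⊢
    rcases hδ t with h | h <;> rcases hδ (t + 1) with h' | h'
    all_goals first
      | linear_combination h' - h
      | exact (hback (by linear_combination h + h')).elim
  refine ⟨δ 0, by simpa using hδ 0, ZMod.eq_add_mul_of_add_one fun t => ?_⟩
  have hδt : δ t = δ 0 := by simpa using ZMod.eq_add_mul_of_add_one hδ_const t
  simp only [δ] at hδt ⊢
  linear_combination hδt

end Dihedral

namespace HamiltonCycle

variable {m d : ℕ}

def edge (d l : ℕ) (t : ZMod m) : Finset (ZMod m × Fin d) :=
  {t} ×ˢ univ ∪ {t + 1} ×ˢ ({j | (j : ℕ) < l} : Finset (Fin d))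

def color (l : ℕ) (x : ZMod m × Fin d) : ZMod m × Bool := (x.1, decide ((x.2 : ℕ) < l))

-- realises `t ↦ a - t` on the edges: the first `l` vertices of block `s` lie in edges `s - 1`
-- and `s`, which go to edges `a - s + 1` and `a - s`
def reflect (l : ℕ) (a : ZMod m) (x : ZMod m × Fin d) : ZMod m × Fin d :=
  (if (x.2 : ℕ) < l then a + 1 - x.1 else a - x.1, x.2)

def position (x : ZMod m × Fin d) : ZMod (d * m) := ((d * x.1.val + x.2 : ℕ) : ZMod (d * m))

variable {l : ℕ}

theorem mem_edge {x : ZMod m × Fin d} {t : ZMod m} :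
    x ∈ edge d l t ↔ x.1 = t ∨ x.1 = t + 1 ∧ (x.2 : ℕ) < l := by
  simp only [edge, mem_union, mem_product, mem_singleton, mem_univ, and_true, mem_filter,
    true_and]

theorem edge_injective (hld : l < d) : Injective (edge (m := m) d l) := by
  intro t t' h
  have : (t, (⟨l, hld⟩ : Fin d)) ∈ edge d l t' := h ▸ mem_edge.mpr (Or.inl rfl)
  simpa using mem_edge.mp this

theorem card_edge (h2 : (2 : ZMod m) ≠ 0) (hld : l ≤ d) (t : ZMod m) :
    #(edge d l t) = d + l := by
  rw [edge, card_union_of_disjoint, card_product, card_product, card_singleton, card_singleton,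
    card_univ, Fintype.card_fin, Fin.card_filter_val_lt, min_eq_right hld, one_mul, one_mul]
  rw [disjoint_left]
  rintro ⟨s, j⟩ hx hx'
  simp only [mem_product, mem_singleton] at hx hx'
  exact one_ne_zero_of_two_ne_zero h2 (by simpa [hx.1] using hx'.1)

theorem forall_mem_edge_iff (h2 : (2 : ZMod m) ≠ 0) {x y : ZMod m × Fin d} :
    (∀ t, y ∈ edge d l t ↔ x ∈ edge d l t) ↔ color l y = color l x := by
  simp only [mem_edge, color, Prod.mk.injEq, decide_eq_decide]
  have h1 := one_ne_zero_of_two_ne_zero h2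
  constructor
  · intro h
    have hx := h x.1
    have hy := h y.1
    have hx' := h (x.1 - 1)
    grind
  · rintro ⟨hfst, hsnd⟩ t
    rw [hfst, hsnd]

theorem relabels_edge_id_iff (h2 : (2 : ZMod m) ≠ 0) {τ : Perm (ZMod m × Fin d)} :
    Relabels (edge d l) τ id ↔ color l ∘ τ = color l := by
  simp only [Relabels, id, Perm.finset_image_eq_self_iff, funext_iff, comp_apply]
  rw [forall_comm]
  exact forall_congr' fun x => forall_mem_edge_iff h2

theorem adjacent_of_relabels_edge (h2 : (2 : ZMod m) ≠ 0) (hl : 0 < l) (hld : l < d)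
    {τ : Perm (ZMod m × Fin d)} {π : ZMod m → ZMod m} (h : Relabels (edge d l) τ π)
    (t : ZMod m) : π (t + 1) = π t + 1 ∨ π t = π (t + 1) + 1 := by
  have hne : π t ≠ π (t + 1) := fun he =>
    one_ne_zero_of_two_ne_zero h2 (by simpa using h.injective (edge_injective hld) he)
  set x : ZMod m × Fin d := (t + 1, ⟨0, by omega⟩)
  have hx (s : ZMod m) (hs : x ∈ edge d l s) : τ x ∈ edge d l (π s) :=
    h s ▸ mem_image_of_mem τ hs
  have hxt := mem_edge.mp (hx t (mem_edge.mpr (Or.inr ⟨rfl, hl⟩)))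
  have hxt' := mem_edge.mp (hx (t + 1) (mem_edge.mpr (Or.inl rfl)))
  grind

theorem relabels_edge_translate (a : ZMod m) :
    Relabels (edge d l) ((Equiv.addLeft a).prodCongr (Equiv.refl _)) (fun t => a + t * 1) := by
  intro t
  ext y
  rw [Perm.mem_finset_image_iff, mem_edge, mem_edge]
  simp only [prodCongr_symm, addLeft_symm, refl_symm, prodCongr_apply, coe_addLeft, coe_refl,
    Prod.map_fst, Prod.map_snd, id_eq, mul_one]
  grind

theorem reflect_involutive (l : ℕ) (a : ZMod m) : Involutive (reflect (d := d) l a) := by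
  intro x
  by_cases h : (x.2 : ℕ) < l <;> simp [reflect, h]

theorem relabels_edge_reflect (a : ZMod m) :
    Relabels (edge d l) (reflect_involutive l a).toPerm (fun t => a + t * -1) := by
  intro t
  ext y
  rw [Perm.mem_finset_image_iff, Involutive.toPerm_symm, Involutive.coe_toPerm, mem_edge,
    mem_edge]
  by_cases h : (y.2 : ℕ) < l <;> simp [reflect, h] <;> grind

theorem position_natCast (i : ℕ) (j : Fin d) :
    position ((i : ZMod m), j) = ((d * i + j : ℕ) : ZMod (d * m)) := by
  rw [position, ZMod.val_natCast, ← Nat.mul_mod_mul_left]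
  push_cast [ZMod.natCast_mod]
  rfl

theorem image_position_edge (hld : l ≤ d) (i : ℕ) :
    (edge d l (i : ZMod m)).image position =
      (range (l + d)).image fun j => ((i * d + j : ℕ) : ZMod (d * m)) := by
  ext y
  simp only [mem_image, mem_range, Prod.exists, mem_edge]
  constructor
  · rintro ⟨s, j, hs | ⟨hs, hj⟩, rfl⟩
    · exact ⟨j, by omega, by rw [hs, position_natCast, Nat.mul_comm i d]⟩
    · refine ⟨d + j, by omega, ?_⟩
      rw [show s = ((i + 1 : ℕ) : ZMod m) by push_cast; exact hs, position_natCast]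
      congr 1
      ring
  · rintro ⟨j, hj, rfl⟩
    by_cases hjd : j < d
    · exact ⟨_, ⟨j, hjd⟩, Or.inl rfl, by rw [position_natCast, Nat.mul_comm i d]⟩
    · refine ⟨((i + 1 : ℕ) : ZMod m), ⟨j - d, by omega⟩,
        Or.inr ⟨by push_cast; rfl, by simp; omega⟩, ?_⟩
      rw [position_natCast]
      congr 1
      rw [Fin.val_mk, Nat.mul_succ, Nat.mul_comm i d]
      omega

variable [NeZero m]

theorem card_color_eq (hld : l ≤ d) (t : ZMod m) (b : Bool) :
    Fintype.card {x : ZMod m × Fin d // color l x = (t, b)} = if b then l else d - l := by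
  have : ({x | color l x = (t, b)} : Finset (ZMod m × Fin d)) =
      {t} ×ˢ ({j | decide ((j : ℕ) < l) = b} : Finset (Fin d)) := by
    ext ⟨s, j⟩
    simp only [color, mem_filter, mem_univ, true_and, mem_product, mem_singleton, Prod.mk.injEq]
  rw [Fintype.card_subtype, this, card_product, card_singleton, one_mul]
  have hlt : #{j : Fin d | (j : ℕ) < l} = l := by rw [Fin.card_filter_val_lt, min_eq_right hld]
  cases b
  · have hsum := card_filter_add_card_filter_not (s := univ) fun j : Fin d => (j : ℕ) < l
    simp only [card_univ, Fintype.card_fin, hlt] at hsum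
    simp only [decide_eq_false_iff_not, Bool.false_eq_true, if_false]
    omega
  · simpa using hlt

theorem card_relabels_edge_id (h2 : (2 : ZMod m) ≠ 0) (hld : l ≤ d) :
    #{τ : Perm (ZMod m × Fin d) | Relabels (edge d l) τ id} =
      (l.factorial * (d - l).factorial) ^ m := by
  simp_rw [relabels_edge_id_iff h2, ← Fintype.card_subtype, DomMulAct.stabilizer_card,
    Fintype.prod_prod_type]
  simp [card_color_eq hld]

theorem exists_relabels_edge_iff (h2 : (2 : ZMod m) ≠ 0) (hl : 0 < l) (hld : l < d)
    {π : ZMod m → ZMod m} :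
    (∃ τ, Relabels (edge d l) τ π) ↔
      ∃ a, ∃ ε ∈ ({1, -1} : Finset (ZMod m)), π = fun t => a + t * ε := by
  constructor
  · rintro ⟨τ, h⟩
    obtain ⟨ε, hε, hπ⟩ := ZMod.exists_eq_add_mul_of_adjacent h2
      (h.injective (edge_injective hld)) (adjacent_of_relabels_edge h2 hl hld h)
    exact ⟨π 0, ε, hε, funext hπ⟩
  · rintro ⟨a, ε, hε, rfl⟩
    rcases mem_insert.mp hε with rfl | hε
    · exact ⟨_, relabels_edge_translate a⟩
    · rw [mem_singleton.mp hε]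
      exact ⟨_, relabels_edge_reflect a⟩

theorem card_relabelings_edge (h2 : (2 : ZMod m) ≠ 0) (hl : 0 < l) (hld : l < d) :
    #{π : ZMod m → ZMod m | ∃ τ, Relabels (edge d l) τ π} = 2 * m := by
  have : ({π | ∃ τ, Relabels (edge d l) τ π} : Finset (ZMod m → ZMod m)) =
      (univ ×ˢ {1, -1}).image fun p : ZMod m × ZMod m => fun t => p.1 + t * p.2 := by
    ext π
    simp [exists_relabels_edge_iff h2 hl hld, eq_comm]
  have hinj : Injective fun p : ZMod m × ZMod m => fun t => p.1 + t * p.2 := by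
    intro p q h
    have h0 := congr_fun h 0
    have h1 := congr_fun h 1
    simp only [zero_mul, add_zero, one_mul] at h0 h1
    exact Prod.ext h0 (by linear_combination h1 - h0)
  rw [this, card_image_of_injective _ hinj, card_product, card_univ, ZMod.card,
    card_pair fun h => h2 (by linear_combination h), mul_comm]

theorem card_stabilizer_edges (h2 : (2 : ZMod m) ≠ 0) (hl : 0 < l) (hld : l < d) :
    #{τ : Perm (ZMod m × Fin d) |
        (univ.image (edge d l)).image (image τ) = univ.image (edge d l)} =
      2 * m * (l.factorial * (d - l).factorial) ^ m := by
  rw [card_stabilizer_image (edge_injective hld), card_relabelings_edge h2 hl hld,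
    card_relabels_edge_id h2 hld.le]

theorem card_image_edges_mul (h2 : (2 : ZMod m) ≠ 0) (hl : 0 < l) (hld : l < d) :
    #(univ.image fun f : ZMod m × Fin d ≃ Fin (d * m) => (univ.image (edge d l)).image (image f)) *
      (2 * m * (l.factorial * (d - l).factorial) ^ m) = (d * m).factorial := by
  rw [← card_stabilizer_edges h2 hl hld, card_image_equiv_mul_card_stabilizer,
    Fintype.card_equiv (Fintype.equivFinOfCardEq (by simp [mul_comm])), Fintype.card_prod,
    ZMod.card, Fintype.card_fin, mul_comm]

theorem image_range_eq_image_edge (hld : l ≤ d) (v : ZMod (d * m) → Fin (d * m)) :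
    (range m).image (fun i => (range (l + d)).image fun j => v ((i * d + j : ℕ) : ZMod (d * m))) =
      (univ.image (edge d l)).image (image (v ∘ position)) := by
  have huniv : (univ : Finset (ZMod m)) = (range m).image (Nat.cast : ℕ → ZMod m) :=
    (eq_univ_of_forall fun t =>
      mem_image.mpr ⟨t.val, mem_range.mpr (ZMod.val_lt t), ZMod.natCast_zmod_val t⟩).symm
  rw [huniv, image_image, image_image]
  refine image_congr fun i _ => ?_
  show _ = (edge d l (i : ZMod m)).image (v ∘ position)
  rw [← image_image, image_position_edge hld, image_image]
  rfl

variable [NeZero d]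

theorem position_bijective : Bijective (position (m := m) (d := d)) := by
  refine (Fintype.bijective_iff_surjective_and_card _).mpr ⟨fun y => ?_, by simp [mul_comm]⟩
  refine ⟨((y.val / d : ℕ), ⟨y.val % d, Nat.mod_lt _ (NeZero.pos d)⟩), ?_⟩
  rw [position_natCast, Nat.div_add_mod, ZMod.natCast_zmod_val]

theorem isHamiltonCycle_iff (h2 : (2 : ZMod m) ≠ 0) (hld : l < d)
    {C : Finset (Finset (Fin (d * m)))} :
    IsHamiltonCycle (d * m) (l + d) l (univ.powersetCard (l + d)) C ↔
      C ∈ univ.image fun f : ZMod m × Fin d ≃ Fin (d * m) =>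
        (univ.image (edge d l)).image (image f) := by
  simp only [IsHamiltonCycle, Nat.add_sub_cancel_left, Nat.mul_div_cancel_left _ (NeZero.pos d),
    mem_image, mem_univ, true_and]
  set P := Equiv.ofBijective _ (position_bijective (m := m) (d := d))
  constructor
  · rintro ⟨-, -, v, hv, rfl⟩
    exact ⟨P.trans (Equiv.ofBijective v hv), (image_range_eq_image_edge hld.le v).symm⟩
  · rintro ⟨f, rfl⟩
    refine ⟨fun s hs => ?_, ?_, f ∘ P.symm, f.bijective.comp P.symm.bijective, ?_⟩
    · obtain ⟨_, ht, rfl⟩ := mem_image.mp hs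
      obtain ⟨t, -, rfl⟩ := mem_image.mp ht
      rw [mem_powersetCard, card_image_of_injective _ f.injective, card_edge h2 hld.le, add_comm]
      exact ⟨subset_univ _, rfl⟩
    · rw [card_image_of_injective _ (image_injective f.injective),
        card_image_of_injective _ (edge_injective hld), card_univ, ZMod.card]
    · rw [image_range_eq_image_edge hld.le]
      congr
      ext x
      simp [P]

end HamiltonCycle

open HamiltonCycle

theorem count_hamilton_cycles_complete (n k l : ℕ) (hl1 : 1 ≤ l) (hl2 : 2 * l < k)
    (hdvd : (k - l) ∣ n) (hn : 3 * (k - l) ≤ n) :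
    ({C : Finset (Finset (Fin n)) |
        IsHamiltonCycle n k l ((Finset.univ : Finset (Fin n)).powersetCard k) C}.ncard : ℝ)
      = ((n - 1).factorial : ℝ) * ((k - l : ℕ) : ℝ) / 2 *
        ((((l.factorial * (k - 2 * l).factorial : ℕ) : ℝ)) ^ (n / (k - l)))⁻¹ := by
  obtain ⟨d, rfl⟩ := Nat.exists_eq_add_of_le (by omega : l ≤ k)
  simp only [Nat.add_sub_cancel_left] at hdvd hn ⊢
  obtain ⟨m, rfl⟩ := hdvd
  have hld : l < d := by omega
  have hm : 3 ≤ m := Nat.le_of_mul_le_mul_left (by linarith) (by omega : 0 < d)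
  have : NeZero d := ⟨by omega⟩
  have : NeZero m := ⟨by omega⟩
  have h2 : (2 : ZMod m) ≠ 0 := by
    rw [← Nat.cast_ofNat, Ne, ZMod.natCast_eq_zero_iff]
    exact fun h => by have := Nat.le_of_dvd two_pos h; omega
  set cycles := univ.image fun f : ZMod m × Fin d ≃ Fin (d * m) =>
    (univ.image (edge d l)).image (image f)
  have hcount := card_image_edges_mul h2 hl1 hld
  rw [← Nat.mul_factorial_pred (Nat.mul_pos (by omega) (by omega)).ne'] at hcount
  have hN : #cycles * (l.factorial * (d - l).factorial) ^ m * 2 = (d * m - 1).factorial * d :=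
    Nat.eq_of_mul_eq_mul_left (by omega : 0 < m) (by linarith)
  rw [show {C | IsHamiltonCycle (d * m) (l + d) l (univ.powersetCard (l + d)) C} = ↑cycles from
      Set.ext fun C => isHamiltonCycle_iff h2 hld,
    Set.ncard_coe_finset, Nat.mul_div_cancel_left m (by omega : 0 < d),
    show l + d - 2 * l = d - l by omega, eq_mul_inv_iff_mul_eq₀ (by positivity),
    eq_div_iff two_ne_zero]
  exact_mod_cast hN
end

section
/- Let k and ℓ be integers with 1 ≤ ℓ < k/2, let n be divisible by k−ℓ with n ≥ 3(k−ℓ), and set m = n/(k−ℓ). Let H be a k-uniform hypergraph on n vertices, let V(H) = A ∪ B be a partition with |A| = ℓm, let M_A = (F₀, …, F_{m−1}) be a sequence of pairwise disjoint ℓ-element subsets partitioning A, and let M_B be a partition of B into m sets of size k−2ℓ. Then for every perfect matching M of the auxiliary bipartite graph G_H = G(M_A, M_B, H), the edge set C(M) = { F_i ∪ t ∪ F_{i+1} : (F_i,F_{i+1}) is matched to t in M, 0 ≤ i ≤ m−1 } is a Hamilton ℓ-cycle of H, and the map M ↦ C(M) is injective on the set of perfect matchings of G_H. -/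
/-- A perfect matching of the auxiliary bipartite graph `G_H = G(M_A, M_B, H)`, encoded
as an injective map `g` assigning to each `S`-vertex `(F i, F (i+1))` a neighbouring
`T`-vertex `g i ∈ P = M_B` (injectivity plus `|P| = m` means every `T`-vertex is
covered). -/
def IsAuxPerfectMatching (n k m : ℕ) (H : Finset (Finset (Fin n)))
    (F : Fin m → Finset (Fin n)) (P : Finset (Finset (Fin n)))
    (g : Fin m → Finset (Fin n)) : Prop :=
  (∀ i, g i ∈ P) ∧ Function.Injective g ∧
  (∀ i : Fin m, F i ∪ g i ∪ F ⟨(i.1 + 1) % m, Nat.mod_lt _ i.pos⟩ ∈ H)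



/-- The vertex at "position" `p`: block `p/d % m` lists `F` (length `l`) then `G` (length `d-l`). -/
def vnat (n d l m : ℕ) (F G : Fin m → Finset (Fin n))
    (hF : ∀ i, (F i).card = l) (hG : ∀ i, (G i).card = d - l)
    (hd : 0 < d) (hm : 0 < m) (p : ℕ) : Fin n :=
  if hj : p % d < l then
    (F ⟨p / d % m, Nat.mod_lt _ hm⟩).orderEmbOfFin (hF _) ⟨p % d, hj⟩
  else
    (G ⟨p / d % m, Nat.mod_lt _ hm⟩).orderEmbOfFin (hG _)
      ⟨p % d - l, by have := Nat.mod_lt p hd; omega⟩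

section
variable {n d l m : ℕ} {F G : Fin m → Finset (Fin n)}
  {hF : ∀ i, (F i).card = l} {hG : ∀ i, (G i).card = d - l}
  {hd : 0 < d} {hm : 0 < m}

lemma vnat_mem_F (p : ℕ) (h : p % d < l) :
    vnat n d l m F G hF hG hd hm p ∈ F ⟨p / d % m, Nat.mod_lt _ hm⟩ := by
  rw [vnat, dif_pos h]; exact Finset.orderEmbOfFin_mem _ _ _

lemma vnat_mem_G (p : ℕ) (h : ¬ p % d < l) :
    vnat n d l m F G hF hG hd hm p ∈ G ⟨p / d % m, Nat.mod_lt _ hm⟩ := by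
  rw [vnat, dif_neg h]; exact Finset.orderEmbOfFin_mem _ _ _

lemma vnat_decomp (hd : 0 < d) (i : Fin m) (j : ℕ) (hj : j < d) :
    (i.1 * d + j) % d = j ∧ (i.1 * d + j) / d % m = i.1 := by
  have h1 : (i.1 * d + j) % d = j := by
    rw [Nat.add_comm, Nat.add_mul_mod_self_right, Nat.mod_eq_of_lt hj]
  have h2 : (i.1 * d + j) / d = i.1 := by
    rw [Nat.add_comm, Nat.add_mul_div_right _ _ hd, Nat.div_eq_of_lt hj, Nat.zero_add]
  exact ⟨h1, by rw [h2, Nat.mod_eq_of_lt i.2]⟩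

lemma vnat_eq_F (hld : l ≤ d) (i : Fin m) (a : Fin l) :
    vnat n d l m F G hF hG hd hm (i.1 * d + a.1)
      = (F i).orderEmbOfFin (hF i) a := by
  obtain ⟨h1, h2⟩ := vnat_decomp (m := m) hd i a.1 (lt_of_lt_of_le a.2 hld)
  rw [vnat]
  simp only [h1, h2, Fin.eta]
  rw [dif_pos a.2]

lemma vnat_eq_G (i : Fin m) (a : Fin (d - l)) (hl : l + a.1 < d) :
    vnat n d l m F G hF hG hd hm (i.1 * d + (l + a.1))
      = (G i).orderEmbOfFin (hG i) a := by
  obtain ⟨h1, h2⟩ := vnat_decomp (m := m) hd i (l + a.1) hl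
  rw [vnat]
  simp only [h1, h2, Fin.eta]
  rw [dif_neg (by omega)]
  congr 1
  exact Fin.ext (by simp)

end
section
variable {n d l m : ℕ} {F G : Fin m → Finset (Fin n)}
  {hF : ∀ i, (F i).card = l} {hG : ∀ i, (G i).card = d - l}
  {hd : 0 < d} {hm : 0 < m}

lemma pos_lt_n (hn : n = m * d) (i : Fin m) (j : ℕ) (hj : j < d) :
    i.1 * d + j < n := by
  have h1 : i.1 * d + j < (i.1 + 1) * d := by
    have : (i.1 + 1) * d = i.1 * d + d := by ring
    omega
  have h2 : (i.1 + 1) * d ≤ m * d := Nat.mul_le_mul_right d i.2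
  omega

lemma wrap_eq (hn : n = m * d) (i : Fin m) (j : ℕ) (hdj : d ≤ j) (hjd : j - d < d) :
    (i.1 * d + j) % n = ((i.1 + 1) % m) * d + (j - d) := by
  rcases Nat.lt_or_ge (i.1 + 1) m with h | h
  · have e1 : (i.1 + 1) % m = i.1 + 1 := Nat.mod_eq_of_lt h
    have e2 : (i.1 + 1) * d = i.1 * d + d := by ring
    have e3 : (i.1 + 1) * d + (j - d) < n := pos_lt_n (d := d) hn ⟨i.1 + 1, h⟩ _ hjd
    rw [e1]
    have : i.1 * d + j = (i.1 + 1) * d + (j - d) := by omega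
    rw [this, Nat.mod_eq_of_lt e3]
  · have him : i.1 + 1 = m := by have := i.2; omega
    have e1 : (i.1 + 1) % m = 0 := by rw [him, Nat.mod_self]
    have e2 : i.1 * d + j = n + (j - d) := by
      have e3 : (i.1 + 1) * d = i.1 * d + d := by ring
      have e4 : (i.1 + 1) * d = m * d := by rw [him]
      omega
    rw [e1, e2, Nat.zero_mul, Nat.zero_add, Nat.add_mod_left, Nat.mod_eq_of_lt (by omega)]

lemma window_eq (hn : n = m * d) (hld : l < d) {k : ℕ} (hk : k = d + l) (i : Fin m) :
    (Finset.range k).image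
        (fun j => vnat n d l m F G hF hG hd hm ((i.1 * d + j) % n))
      = F i ∪ G i ∪ F ⟨(i.1 + 1) % m, Nat.mod_lt _ hm⟩ := by
  set i' : Fin m := ⟨(i.1 + 1) % m, Nat.mod_lt _ hm⟩ with hi'
  ext x
  simp only [Finset.mem_image, Finset.mem_range, Finset.mem_union]
  constructor
  · rintro ⟨j, hj, rfl⟩
    rcases Nat.lt_or_ge j d with hjd | hjd
    · have hlt := pos_lt_n (d := d) hn i j hjd
      rw [Nat.mod_eq_of_lt hlt]
      obtain ⟨h1, h2⟩ := vnat_decomp (m := m) hd i j hjd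
      rcases Nat.lt_or_ge j l with hjl | hjl
      · left; left
        have := vnat_mem_F (F := F) (G := G) (hF := hF) (hG := hG) (hd := hd) (hm := hm)
          (i.1 * d + j) (by rw [h1]; exact hjl)
        have hfi : (⟨(i.1 * d + j) / d % m, Nat.mod_lt _ hm⟩ : Fin m) = i := Fin.ext h2
        rwa [hfi] at this
      · left; right
        have := vnat_mem_G (F := F) (G := G) (hF := hF) (hG := hG) (hd := hd) (hm := hm)
          (i.1 * d + j) (by omega)
        have hfi : (⟨(i.1 * d + j) / d % m, Nat.mod_lt _ hm⟩ : Fin m) = i := Fin.ext h2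
        rwa [hfi] at this
    · right
      have hr : j - d < l := by omega
      rw [wrap_eq hn i j hjd (by omega)]
      obtain ⟨h1, h2⟩ := vnat_decomp (m := m) hd i' (j - d) (by omega)
      have := vnat_mem_F (F := F) (G := G) (hF := hF) (hG := hG) (hd := hd) (hm := hm)
        (i'.1 * d + (j - d)) (by rw [h1]; exact hr)
      have hfi : (⟨(i'.1 * d + (j - d)) / d % m, Nat.mod_lt _ hm⟩ : Fin m) = i' := Fin.ext h2
      rwa [hfi] at this
  · rintro ((hx | hx) | hx)
    · have : x ∈ Set.range ((F i).orderEmbOfFin (hF i)) := by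
        rw [Finset.range_orderEmbOfFin]; exact hx
      obtain ⟨a, ha⟩ := this
      refine ⟨a.1, by omega, ?_⟩
      rw [Nat.mod_eq_of_lt (pos_lt_n (d := d) hn i a.1 (by have := a.2; omega))]
      rw [vnat_eq_F (hld := hld.le)]; exact ha
    · have : x ∈ Set.range ((G i).orderEmbOfFin (hG i)) := by
        rw [Finset.range_orderEmbOfFin]; exact hx
      obtain ⟨a, ha⟩ := this
      have haa : l + a.1 < d := by have := a.2; omega
      refine ⟨l + a.1, by omega, ?_⟩
      rw [Nat.mod_eq_of_lt (pos_lt_n (d := d) hn i _ haa)]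
      rw [vnat_eq_G i a haa]; exact ha
    · have : x ∈ Set.range ((F i').orderEmbOfFin (hF i')) := by
        rw [Finset.range_orderEmbOfFin]; exact hx
      obtain ⟨a, ha⟩ := this
      refine ⟨d + a.1, by omega, ?_⟩
      have : (i.1 * d + (d + a.1)) % n = i'.1 * d + a.1 := by
        rw [wrap_eq hn i (d + a.1) (by omega) (by have := a.2; omega)]
        simp [hi']
      rw [this, vnat_eq_F (hld := hld.le)]; exact ha

lemma vnat_canon_F (p : ℕ) (hpd : p / d < m) (h : p % d < l) :
    vnat n d l m F G hF hG hd hm p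
      = (F ⟨p / d, hpd⟩).orderEmbOfFin (hF _) ⟨p % d, h⟩ := by
  have h2 : p / d % m = p / d := Nat.mod_eq_of_lt hpd
  rw [vnat, dif_pos h]
  simp only [h2]

lemma vnat_canon_G (p : ℕ) (hpd : p / d < m) (h : ¬ p % d < l)
    (hb : p % d - l < d - l) :
    vnat n d l m F G hF hG hd hm p
      = (G ⟨p / d, hpd⟩).orderEmbOfFin (hG _) ⟨p % d - l, hb⟩ := by
  have h2 : p / d % m = p / d := Nat.mod_eq_of_lt hpd
  rw [vnat, dif_neg h]
  simp only [h2]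

lemma vnat_inj (hn : n = m * d) (hld : l < d)
    (hFd : ∀ i j, i ≠ j → Disjoint (F i) (F j))
    (hGd : ∀ i j, i ≠ j → Disjoint (G i) (G j))
    (hFG : ∀ i j, Disjoint (F i) (G j)) :
    ∀ p q : ℕ, p < n → q < n →
      vnat n d l m F G hF hG hd hm p = vnat n d l m F G hF hG hd hm q → p = q := by
  intro p q hp hq h
  have hpm : p % d < d := Nat.mod_lt _ hd
  have hqm : q % d < d := Nat.mod_lt _ hd
  have hpd : p / d < m := Nat.div_lt_of_lt_mul (by rw [Nat.mul_comm]; omega)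
  have hqd : q / d < m := Nat.div_lt_of_lt_mul (by rw [Nat.mul_comm]; omega)
  have e1 : d * (p / d) + p % d = p := Nat.div_add_mod p d
  have e2 : d * (q / d) + q % d = q := Nat.div_add_mod q d
  have hip : (⟨p / d % m, Nat.mod_lt _ hm⟩ : Fin m) = ⟨p / d, hpd⟩ :=
    Fin.ext (Nat.mod_eq_of_lt hpd)
  have hiq : (⟨q / d % m, Nat.mod_lt _ hm⟩ : Fin m) = ⟨q / d, hqd⟩ :=
    Fin.ext (Nat.mod_eq_of_lt hqd)
  rcases Nat.lt_or_ge (p % d) l with h1 | h1 <;> rcases Nat.lt_or_ge (q % d) l with h2 | h2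
  · have hm1 := vnat_mem_F (F := F) (G := G) (hF := hF) (hG := hG) (hd := hd) (hm := hm) p h1
    have hm2 := vnat_mem_F (F := F) (G := G) (hF := hF) (hG := hG) (hd := hd) (hm := hm) q h2
    rw [hip, h] at hm1
    rw [hiq] at hm2
    have hie : (⟨p / d, hpd⟩ : Fin m) = ⟨q / d, hqd⟩ := by
      by_contra hne
      exact Finset.disjoint_left.mp (hFd _ _ hne) hm1 hm2
    have h' := (vnat_canon_F (hG := hG) (hd := hd) (hm := hm) p hpd h1).symm.trans
      (h.trans (vnat_canon_F (hG := hG) (hd := hd) (hm := hm) q hqd h2))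
    rw [hie] at h'
    have h3 : p % d = q % d :=
      congrArg Fin.val (((F _).orderEmbOfFin (hF _)).injective h')
    have h4 : p / d = q / d := congrArg Fin.val hie
    rw [h4, h3] at e1
    omega
  · have hm1 := vnat_mem_F (F := F) (G := G) (hF := hF) (hG := hG) (hd := hd) (hm := hm) p h1
    have hm2 := vnat_mem_G (F := F) (G := G) (hF := hF) (hG := hG) (hd := hd) (hm := hm) q (by omega)
    rw [hip, h] at hm1
    rw [hiq] at hm2
    exact absurd hm2 (Finset.disjoint_left.mp (hFG _ _) hm1)
  · have hm1 := vnat_mem_G (F := F) (G := G) (hF := hF) (hG := hG) (hd := hd) (hm := hm) p (by omega)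
    have hm2 := vnat_mem_F (F := F) (G := G) (hF := hF) (hG := hG) (hd := hd) (hm := hm) q h2
    rw [hip, h] at hm1
    rw [hiq] at hm2
    exact absurd hm1 (Finset.disjoint_left.mp (hFG _ _) hm2)
  · have hm1 := vnat_mem_G (F := F) (G := G) (hF := hF) (hG := hG) (hd := hd) (hm := hm) p (by omega)
    have hm2 := vnat_mem_G (F := F) (G := G) (hF := hF) (hG := hG) (hd := hd) (hm := hm) q (by omega)
    rw [hip, h] at hm1
    rw [hiq] at hm2
    have hie : (⟨p / d, hpd⟩ : Fin m) = ⟨q / d, hqd⟩ := by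
      by_contra hne
      exact Finset.disjoint_left.mp (hGd _ _ hne) hm1 hm2
    have h' := (vnat_canon_G (hF := hF) (hd := hd) (hm := hm) p hpd (by omega)
        (by omega)).symm.trans
      (h.trans (vnat_canon_G (hF := hF) (hd := hd) (hm := hm) q hqd (by omega) (by omega)))
    rw [hie] at h'
    have h3 : p % d - l = q % d - l :=
      congrArg Fin.val (((G _).orderEmbOfFin (hG _)).injective h')
    have h4 : p / d = q / d := congrArg Fin.val hie
    have h5 : p % d = q % d := by omega
    rw [h4, h5] at e1
    omega

end

theorem aux_matchings_give_hamilton_cycles (n k l : ℕ)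
    (hl1 : 1 ≤ l) (hl2 : 2 * l < k) (hdvd : (k - l) ∣ n) (hn : 3 * (k - l) ≤ n)
    (H : Finset (Finset (Fin n))) (hH : ∀ f ∈ H, f.card = k)
    (m : ℕ) (hm : m = n / (k - l))
    (F : Fin m → Finset (Fin n)) (P : Finset (Finset (Fin n)))
    (hF : ∀ i, (F i).card = l)
    (hFdisj : ∀ i j, i ≠ j → Disjoint (F i) (F j))
    (hP : ∀ s ∈ P, s.card = k - 2 * l)
    (hPcard : P.card = m)
    (hPdisj : ∀ s₁ ∈ P, ∀ s₂ ∈ P, s₁ ≠ s₂ → Disjoint s₁ s₂)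
    (hPA : ∀ s ∈ P, Disjoint s (Finset.univ.biUnion F))
    (hcover : Finset.univ.biUnion F ∪ P.sup id = (Finset.univ : Finset (Fin n))) :
    (∀ g : Fin m → Finset (Fin n), IsAuxPerfectMatching n k m H F P g →
      IsHamiltonCycle n k l H (Finset.univ.image
        (fun i : Fin m => F i ∪ g i ∪ F ⟨(i.1 + 1) % m, Nat.mod_lt _ i.pos⟩))) ∧
    (∀ g g' : Fin m → Finset (Fin n),
      IsAuxPerfectMatching n k m H F P g → IsAuxPerfectMatching n k m H F P g' →
      Finset.univ.image
          (fun i : Fin m => F i ∪ g i ∪ F ⟨(i.1 + 1) % m, Nat.mod_lt _ i.pos⟩) =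
        Finset.univ.image
          (fun i : Fin m => F i ∪ g' i ∪ F ⟨(i.1 + 1) % m, Nat.mod_lt _ i.pos⟩) →
      g = g') := by
  have hd : 0 < k - l := by omega
  have hld : l < k - l := by omega
  have hnm : n = m * (k - l) := by rw [hm, Nat.div_mul_cancel hdvd]
  have hm3 : 3 ≤ m := by
    rw [hm]; exact (Nat.le_div_iff_mul_le hd).mpr (by omega)
  have hm0 : 0 < m := by omega
  have hn0 : 0 < n := by omega
  haveI : NeZero n := ⟨by omega⟩
  have hsval : ∀ a : Fin m, (a.1 + 1) % m = if a.1 + 1 = m then 0 else a.1 + 1 := by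
    intro a
    split_ifs with h
    · rw [h, Nat.mod_self]
    · exact Nat.mod_eq_of_lt (by have := a.2; omega)
  have hFne : ∀ a : Fin m, (F a).Nonempty := fun a =>
    Finset.card_pos.mp (by rw [hF a]; omega)
  have locate : ∀ (a b c : Fin m) (t : Finset (Fin n)), t ∈ P →
      F a ⊆ F b ∪ t ∪ F c → a = b ∨ a = c := by
    intro a b c t ht hsub
    obtain ⟨x, hx⟩ := hFne a
    have hx2 := hsub hx
    simp only [Finset.mem_union] at hx2
    rcases hx2 with (hb | htx) | hc
    · left; by_contra hne; exact Finset.disjoint_left.mp (hFdisj a b hne) hx hb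
    · exfalso
      exact Finset.disjoint_left.mp (hPA t ht) htx
        (Finset.mem_biUnion.mpr ⟨a, Finset.mem_univ a, hx⟩)
    · right; by_contra hne; exact Finset.disjoint_left.mp (hFdisj a c hne) hx hc
  have gdiff : ∀ (g : Fin m → Finset (Fin n)), (∀ j, g j ∈ P) → ∀ i : Fin m,
      g i = (F i ∪ g i ∪ F ⟨(i.1 + 1) % m, Nat.mod_lt _ i.pos⟩) \
        Finset.univ.biUnion F := by
    intro g hg i
    ext x
    simp only [Finset.mem_sdiff, Finset.mem_union, Finset.mem_biUnion, Finset.mem_univ,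
      true_and, not_exists]
    constructor
    · intro hxg
      exact ⟨Or.inl (Or.inr hxg), fun j hxj =>
        Finset.disjoint_left.mp (hPA _ (hg i)) hxg
          (Finset.mem_biUnion.mpr ⟨j, Finset.mem_univ j, hxj⟩)⟩
    · rintro ⟨(hf | hgx) | hf2, hnf⟩
      · exact absurd hf (hnf i)
      · exact hgx
      · exact absurd hf2 (hnf _)
  have key : ∀ g g' : Fin m → Finset (Fin n),
      (∀ j, g j ∈ P) → (∀ j, g' j ∈ P) →
      ∀ i i' : Fin m,
        F i ∪ g i ∪ F ⟨(i.1 + 1) % m, Nat.mod_lt _ i.pos⟩ =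
          F i' ∪ g' i' ∪ F ⟨(i'.1 + 1) % m, Nat.mod_lt _ i'.pos⟩ →
        i = i' ∧ g i = g' i' := by
    intro g g' hg hg' i i' he
    have hgg : g i = g' i' := by
      rw [gdiff g hg i, gdiff g' hg' i', he]
    refine ⟨?_, hgg⟩
    have h1 : i = i' ∨ i = ⟨(i'.1 + 1) % m, Nat.mod_lt _ i'.pos⟩ := by
      refine locate i i' _ (g' i') (hg' i') ?_
      rw [← he]
      intro x hx
      simp only [Finset.mem_union]
      exact Or.inl (Or.inl hx)
    have h2 : (⟨(i.1 + 1) % m, Nat.mod_lt _ i.pos⟩ : Fin m) = i' ∨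
        (⟨(i.1 + 1) % m, Nat.mod_lt _ i.pos⟩ : Fin m) = ⟨(i'.1 + 1) % m, Nat.mod_lt _ i'.pos⟩ := by
      refine locate _ i' _ (g' i') (hg' i') ?_
      rw [← he]
      intro x hx
      simp only [Finset.mem_union]
      exact Or.inr hx
    rcases h1 with h1 | h1
    · exact h1
    · rcases h2 with h2 | h2
      · exfalso
        have v1 : i.1 = (i'.1 + 1) % m := congrArg Fin.val h1
        have v2 : (i.1 + 1) % m = i'.1 := congrArg Fin.val h2
        rw [hsval i'] at v1
        rw [hsval i] at v2
        have := i.2; have := i'.2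
        split_ifs at v1 v2 <;> omega
      · apply Fin.ext
        have v1 : i.1 = (i'.1 + 1) % m := congrArg Fin.val h1
        have v2 : (i.1 + 1) % m = (i'.1 + 1) % m := congrArg Fin.val h2
        rw [hsval i'] at v1
        rw [hsval i, hsval i'] at v2
        have := i.2; have := i'.2
        split_ifs at v1 v2 <;> omega
  constructor
  · -- Hamilton cycle part
    intro g hgm
    obtain ⟨hg1, hg2, hg3⟩ := hgm
    have hgc : ∀ i, (g i).card = (k - l) - l := fun i => by
      have := hP _ (hg1 i); omega
    have hGd : ∀ i j : Fin m, i ≠ j → Disjoint (g i) (g j) := fun i j hne =>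
      hPdisj _ (hg1 i) _ (hg1 j) (fun h => hne (hg2 h))
    have hFG : ∀ i j : Fin m, Disjoint (F i) (g j) := fun i j =>
      Finset.disjoint_left.mpr (fun x hx hxg =>
        Finset.disjoint_left.mp (hPA _ (hg1 j)) hxg
          (Finset.mem_biUnion.mpr ⟨i, Finset.mem_univ i, hx⟩))
    have hedgeinj : Function.Injective
        (fun i : Fin m => F i ∪ g i ∪ F ⟨(i.1 + 1) % m, Nat.mod_lt _ i.pos⟩) := by
      intro a b hab
      exact (key g g hg1 hg1 a b hab).1
    refine ⟨?_, ?_, fun x => vnat n (k - l) l m F g hF hgc hd hm0 x.val, ?_, ?_⟩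
    · intro e he
      obtain ⟨i, _, rfl⟩ := Finset.mem_image.mp he
      exact hg3 i
    · rw [← hm, Finset.card_image_of_injective _ hedgeinj, Finset.card_univ,
        Fintype.card_fin]
    · refine (Fintype.bijective_iff_injective_and_card _).mpr ⟨?_, by simp [ZMod.card]⟩
      intro x y hxy
      exact ZMod.val_injective n
        (vnat_inj hnm hld hFdisj hGd hFG x.val y.val (ZMod.val_lt x) (ZMod.val_lt y) hxy)
    · rw [← hm]
      ext c
      simp only [Finset.mem_image, Finset.mem_univ, true_and, Finset.mem_range]
      constructor
      · rintro ⟨i, rfl⟩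
        refine ⟨i.1, i.2, ?_⟩
        simp only [ZMod.val_natCast]
        exact window_eq (hF := hF) (hG := hgc) (hd := hd) (hm := hm0) hnm hld
          (k := k) (by omega) i
      · rintro ⟨a, ha, rfl⟩
        refine ⟨⟨a, ha⟩, ?_⟩
        symm
        simp only [ZMod.val_natCast]
        exact window_eq (hF := hF) (hG := hgc) (hd := hd) (hm := hm0) hnm hld
          (k := k) (by omega) ⟨a, ha⟩
  · -- injectivity part
    intro g g' hgm hgm' heq
    funext i
    have hmem : (F i ∪ g i ∪ F ⟨(i.1 + 1) % m, Nat.mod_lt _ i.pos⟩) ∈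
        Finset.univ.image
          (fun i : Fin m => F i ∪ g' i ∪ F ⟨(i.1 + 1) % m, Nat.mod_lt _ i.pos⟩) := by
      rw [← heq]
      exact Finset.mem_image_of_mem _ (Finset.mem_univ i)
    obtain ⟨i', _, he⟩ := Finset.mem_image.mp hmem
    obtain ⟨hii, hgg⟩ := key g g' hgm.1 hgm'.1 i i' he.symm
    calc g i = g' i' := hgg
      _ = g' i := by rw [← hii]
end
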